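/- arXiv:math/0404146 — 2 statements merged into one kernel-verified Lean document; each statement's English description precedes it below -/
import Mathlib

section
/- Let 𝔭 be a regular universality parameter and T a 𝔭-narrow infinite H-tree. Then there exist a 𝔭-narrow infinite H-tree T* ⊇ T and a strictly increasing sequence ⟨n_k : k < ω⟩ such that for every k: (b)_k if ν₀, ν₁ ∈ T* have length n_k + 1 and π̄ is an n_k-coordinate-wise permutation with π̄(ν₀) = ν₁, then π̄[(T*)^{[ν₀]}] = (T*)^{[ν₁]}; and (c)_k if S is a finite H-tree of level n_{k+1} + 1 such that for all ν₀ ∈ S and ν₁ ∈ T* of length n_k + 1 and every n_k-coordinate-wise permutation π̄ with π̄(ν₀) = ν₁ we have π̄[S^{[ν₀]}] ⊆ (T*)^{[ν₁]}, then (S, n_k + 1, n_{k+1}) ∈ 𝒢. -/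
open Set Filter MeasureTheory NNReal ENNReal

namespace UnivForcing

abbrev Node := List ℕ

/-- `η` is a node respecting `H`: each entry is below the corresponding value of `H`. -/
def IsHNode (H : ℕ → ℕ) (η : Node) : Prop := ∀ i < η.length, η.getD i 0 < H i

/-- A tree of finite sequences: contains the empty sequence and is closed under prefixes. -/
def IsTreeSet (T : Set Node) : Prop :=
  ([] : Node) ∈ T ∧ ∀ η ∈ T, ∀ ν : Node, ν <+: η → ν ∈ T

/-- The nodes of `T` of length exactly `n`. -/
def levelSet (T : Set Node) (n : ℕ) : Set Node := {η ∈ T | η.length = n}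

/-- The nodes of `T` of length at most `n`. -/
def below (T : Set Node) (n : ℕ) : Set Node := {η ∈ T | η.length ≤ n}

/-- A finite `H`-tree of level `N`. -/
def IsFinTree (H : ℕ → ℕ) (T : Set Node) (N : ℕ) : Prop :=
  IsTreeSet T ∧ (∀ η ∈ T, IsHNode H η ∧ η.length ≤ N) ∧
    ∀ η ∈ T, ∃ ν ∈ T, η <+: ν ∧ ν.length = N

/-- An infinite `H`-tree: a tree of `H`-nodes with no maximal nodes. -/
def IsInfTree (H : ℕ → ℕ) (T : Set Node) : Prop :=
  IsTreeSet T ∧ (∀ η ∈ T, IsHNode H η) ∧ ∀ η ∈ T, ∃ ν ∈ T, η <+: ν ∧ η ≠ ν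

/-- A simplified universality parameter (Definition 2.2). -/
structure UnivParam (H : ℕ → ℕ) where
  G : Set (Set Node × ℕ × ℕ)
  F : ℕ → ℕ
  G_tree : ∀ S a b, (S, a, b) ∈ G → ∃ N, IsFinTree H S N ∧ a ≤ b ∧ b ≤ N
  G_root : ((({([] : Node)}) : Set Node), 0, 0) ∈ G
  G_mono : ∀ S0 a0 b0 N0 S1 N1, (S0, a0, b0) ∈ G → IsFinTree H S0 N0 →
    IsFinTree H S1 N1 → N0 ≤ N1 → levelSet S1 N0 ⊆ S0 →
    ∀ a1 b1, a1 ≤ a0 → b0 ≤ b1 → b1 ≤ N1 → (S1, a1, b1) ∈ G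
  F_incr : StrictMono F
  G_amalg : ∀ S0 a0 b0 S1 a1 b1 N S M,
    (S0, a0, b0) ∈ G → (S1, a1, b1) ∈ G →
    IsFinTree H S0 N → IsFinTree H S1 N → IsFinTree H S M → M < N →
    levelSet S0 M ⊆ S → levelSet S1 M ⊆ S →
    M < a0 → b0 < a1 → F b1 < N →
    ∃ S', (S', a0, F b1) ∈ G ∧ IsFinTree H S' N ∧
      S0 ∪ S1 ⊆ S' ∧ levelSet S' M = levelSet S M

/-- `T` is narrow with respect to the family `G` (Definition 2.3(1)). -/
def IsNarrowG (G : Set (Set Node × ℕ × ℕ)) (T : Set Node) : Prop :=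
  ∀ m, ∃ a, m ≤ a ∧ ∃ b, a < b ∧ (below T (b + 1), a, b) ∈ G

def IsNarrow {H : ℕ → ℕ} (p : UnivParam H) (T : Set Node) : Prop := IsNarrowG p.G T

/-- Suitability of a universality parameter (Definition 3.5(1)). -/
def Suitable {H : ℕ → ℕ} (p : UnivParam H) : Prop :=
  (∀ n, ∃ N, n < N ∧ ∀ S a b NS, (S, a, b) ∈ p.G → IsFinTree H S NS → N ≤ a →
    ∀ η : Node, IsHNode H η → η.length = n →
      ∃ ν : Node, IsHNode H ν ∧ ν.length = NS ∧ η <+: ν ∧ ν ∉ S) ∧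
  (∀ n, ∃ N, n < N ∧ ∀ S, IsFinTree H S n →
    ∀ η : Node, IsHNode H η → η.length = N → η.take n ∈ S →
      ∃ S' a b, (S', a, b) ∈ p.G ∧ n < a ∧ a ≤ b ∧ b < N ∧ S ⊆ S' ∧
        levelSet S' n = levelSet S n ∧ η ∈ S')

/-- The space 𝒳 = ∏_{i<ω} H(i). -/
abbrev XSp (H : ℕ → ℕ) := (i : ℕ) → Fin (H i)

/-- The initial segment of length `n` of a point of 𝒳, as a node. -/
def branchNode (H : ℕ → ℕ) (x : XSp H) (n : ℕ) : Node :=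
  List.ofFn fun i : Fin n => (x i : ℕ)

/-- The set of ω-branches `[T]` of a tree `T`, as a subset of 𝒳. -/
def branches (H : ℕ → ℕ) (T : Set Node) : Set (XSp H) :=
  {x | ∀ n, branchNode H x n ∈ T}

/-- A closed narrow set: the branch set of a narrow infinite `H`-tree. -/
def NarrowClosedG (H : ℕ → ℕ) (G : Set (Set Node × ℕ × ℕ)) (A : Set (XSp H)) : Prop :=
  ∃ T, IsInfTree H T ∧ IsNarrowG G T ∧ A = branches H T

/-- The ideal ℐ⁰ generated by narrow closed sets. -/
def I0G (H : ℕ → ℕ) (G : Set (Set Node × ℕ × ℕ)) : Set (Set (XSp H)) :=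
  {A | ∃ (n : ℕ) (f : Fin n → Set (XSp H)),
    (∀ i, NarrowClosedG H G (f i)) ∧ A ⊆ ⋃ i, f i}

/-- The σ-ideal ℐ generated by narrow closed sets. -/
def IpG (H : ℕ → ℕ) (G : Set (Set Node × ℕ × ℕ)) : Set (Set (XSp H)) :=
  {A | ∃ f : ℕ → Set (XSp H), (∀ n, NarrowClosedG H G (f n)) ∧ A ⊆ ⋃ n, f n}

/-- A coordinate-wise permutation for `H`. -/
structure CWPerm (H : ℕ → ℕ) where
  f : ℕ → ℕ → ℕ
  bij : ∀ n, Set.BijOn (f n) (Set.Iio (H n)) (Set.Iio (H n))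
  id_out : ∀ n k, H n ≤ k → f n k = k

/-- The action of a coordinate-wise permutation on a node. -/
def CWPerm.apply {H : ℕ → ℕ} (π : CWPerm H) (η : Node) : Node :=
  η.mapIdx fun i k => π.f i k

/-- `π` is an `n`-coordinate-wise permutation. -/
def CWPerm.IsRat {H : ℕ → ℕ} (π : CWPerm H) (n : ℕ) : Prop :=
  ∀ m, n < m → ∀ k, π.f m k = k

/-- The action of a coordinate-wise permutation on the space 𝒳. -/
def CWPerm.act {H : ℕ → ℕ} (π : CWPerm H) (x : XSp H) : XSp H :=
  fun i => ⟨π.f i (x i).val, (π.bij i).mapsTo (x i).isLt⟩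

/-- A regular universality parameter (Definition 3.13). -/
def RegularParam {H : ℕ → ℕ} (p : UnivParam H) : Prop :=
  Suitable p ∧ ∀ π : CWPerm H, (∃ n, π.IsRat n) →
    ∀ S a b, (S, a, b) ∈ p.G → (π.apply '' S, a, b) ∈ p.G

/-- The additivity of an ideal (family of sets). -/
noncomputable def addIdeal {α : Type} (I : Set (Set α)) : Cardinal :=
  sInf {c | ∃ A : Set (Set α), A ⊆ I ∧ ⋃₀ A ∉ I ∧ Cardinal.mk A = c}

/-- The cofinality of an ideal (family of sets). -/
noncomputable def cofIdeal {α : Type} (I : Set (Set α)) : Cardinal :=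
  sInf {c | ∃ A : Set (Set α), A ⊆ I ∧ (∀ B ∈ I, ∃ C ∈ A, B ⊆ C) ∧ Cardinal.mk A = c}

/-- Eventual domination `f ≤* g`. -/
def evDomLE (f g : ℕ → ℕ) : Prop := ∀ᶠ n in atTop, f n ≤ g n

/-- The unbounding number 𝔟. -/
noncomputable def bNum : Cardinal :=
  sInf {c | ∃ F : Set (ℕ → ℕ), (∀ g, ∃ f ∈ F, ¬ evDomLE f g) ∧ Cardinal.mk F = c}

/-- The dominating number 𝔡. -/
noncomputable def dNum : Cardinal :=
  sInf {c | ∃ F : Set (ℕ → ℕ), (∀ g, ∃ f ∈ F, evDomLE g f) ∧ Cardinal.mk F = c}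

/-- The family 𝒢^{g,A}_𝐅 of Definition 2.8. -/
def GgA (H : ℕ → ℕ) (g : ℕ → ℕ) (A : Set ℕ) (FF : Set Node → NNReal) :
    Set (Set Node × ℕ × ℕ) :=
  {x | x = ((({([] : Node)}) : Set Node), 0, 0) ∨
    ∃ (S : Set Node) (a b N : ℕ), x = (S, a, b) ∧ IsFinTree H S N ∧ a ≤ b ∧ b ≤ N ∧
      (∀ ν ∈ levelSet S a, ∃ η : Node, IsHNode H η ∧ η.length = N ∧ ν <+: η ∧ η ∉ S) ∧
      ∃ Y : ℕ → Set Node,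
        (∀ i ∈ A ∩ Set.Ico a b, IsFinTree H (Y i) (i + 1) ∧ FF (Y i) ≤ (g i : NNReal)) ∧
        ∀ η ∈ levelSet S N, ∃ i ∈ A ∩ Set.Ico a b, η.take (i + 1) ∈ levelSet (Y i) (i + 1)}

/-- The family 𝒢^cmz_H of Definition 2.12. -/
def Gcmz (H : ℕ → ℕ) : Set (Set Node × ℕ × ℕ) :=
  {x | x = ((({([] : Node)}) : Set Node), 0, 0) ∨
    ∃ (S : Set Node) (a b N : ℕ), x = (S, a, b) ∧ IsFinTree H S N ∧ a ≤ b ∧ b ≤ N ∧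
      ((levelSet S b).ncard : ℝ) / (∏ i ∈ Finset.range b, (H i : ℝ)) ≤
        ∑ i ∈ Finset.Icc a b, 1 / ((i : ℝ) + 1) ^ 2}

/-- The level of a set of nodes (the supremum of the lengths of its elements). -/
noncomputable def treeLev (S : Set Node) : ℕ := sSup {n | ∃ η ∈ S, η.length = n}

/-- The function 𝐅₂ of Example 2.10(2). -/
noncomputable def F2fn (S : Set Node) : NNReal :=
  ((({k | ∃ η ∈ levelSet S (treeLev S), η.getLast? = some k}).ncard - 1 : ℕ) : NNReal)

/-- Immediate successors of a node in a tree. -/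
def succs (S : Set Node) (s : Node) : Set Node :=
  {ν ∈ S | s <+: ν ∧ ν.length = s.length + 1}

/-- The function 𝐅₀ of Example 2.10(1). -/
noncomputable def F0fn (S : Set Node) : NNReal :=
  ((sSup {m | ∃ s ∈ S, (∃ ν ∈ S, s <+: ν ∧ s ≠ ν) ∧ m = (succs S s).ncard - 1} : ℕ) : NNReal)

/-- The function 𝐅₁ of Example 2.10(1). -/
noncomputable def F1fn (S : Set Node) : NNReal :=
  (((levelSet S (treeLev S)).ncard - 1 : ℕ) : NNReal)

/-- The basic cylinder determined by a node. -/
def cyl (H : ℕ → ℕ) (η : Node) : Set (XSp H) := {x | branchNode H x η.length = η}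

/-- The mass of the cylinder of a node with respect to the product measure:
`1/∏_{i<lh(η)} H(i)`. -/
noncomputable def cylMass (H : ℕ → ℕ) (η : Node) : ℝ≥0∞ :=
  (∏ i ∈ Finset.range η.length, (H i : ℝ≥0∞))⁻¹

/-- `A` is null with respect to the product measure on 𝒳 (each factor carrying the
uniform probability measure): for every `ε > 0`, `A` can be covered by countably many
basic cylinders of total mass at most `ε`. -/
def ProdNull (H : ℕ → ℕ) (A : Set (XSp H)) : Prop :=
  ∀ ε : ℝ≥0∞, 0 < ε → ∃ C : ℕ → Node, A ⊆ (⋃ n, cyl H (C n)) ∧ ∑' n, cylMass H (C n) ≤ ε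

/-- A condition in the forcing notion Q^tree(𝔭). -/
def QCond (H : ℕ → ℕ) (p : UnivParam H) (q : ℕ × Set Node) : Prop :=
  IsInfTree H q.2 ∧ IsNarrow p q.2

/-- The order of the forcing notion Q^tree(𝔭). -/
def QLe (q r : ℕ × Set Node) : Prop :=
  q.1 ≤ r.1 ∧ q.2 ⊆ r.2 ∧ levelSet r.2 q.1 = levelSet q.2 q.1


/-- The subtree `T^{[ν]}` of nodes of `T` extending `ν`. -/
def aboveNode (T : Set Node) (ν : Node) : Set Node := {η ∈ T | ν <+: η}

/-- The set `Z(n̄, w̄)` of Proposition 4.6. -/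
def Zset (H : ℕ → ℕ) (A : Set ℕ) (nseq : ℕ → ℕ) (w : ℕ → Set ℕ) : Set (XSp H) :=
  {x | ∀ᶠ k in atTop, ∃ i ∈ A ∩ Set.Ico (nseq k) (nseq (k + 1)), ((x i : ℕ) ∈ w i)}

/-! ### Auxiliary material for Lemma 3.14 -/

section Aux

variable {H : ℕ → ℕ}

lemma CWPerm.length_apply (π : CWPerm H) (η : Node) : (π.apply η).length = η.length :=
  List.length_mapIdx

lemma CWPerm.getElem_apply (π : CWPerm H) (η : Node) (i : ℕ) (h : i < η.length) :
    (π.apply η)[i]'(by simpa [π.length_apply] using h) = π.f i η[i] :=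
  List.getElem_mapIdx

lemma CWPerm.apply_take (π : CWPerm H) (η : Node) (m : ℕ) :
    π.apply (η.take m) = (π.apply η).take m := by
  apply List.ext_getElem
  · simp [π.length_apply]
  · intro i h₁ h₂
    have hi : i < η.length := by
      simp only [CWPerm.length_apply, List.length_take, lt_inf_iff] at h₁; exact h₁.2
    have him : i < (η.take m).length := by simpa [π.length_apply] using h₁
    rw [List.getElem_take, π.getElem_apply (η.take m) i him, π.getElem_apply η i hi,
      List.getElem_take]

lemma CWPerm.apply_prefix (π : CWPerm H) {ν η : Node} (h : ν <+: η) :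
    π.apply ν <+: π.apply η := by
  rw [List.prefix_iff_eq_take] at h ⊢
  rw [π.length_apply]
  conv_lhs => rw [h, π.apply_take]

lemma CWPerm.apply_hnode (π : CWPerm H) {η : Node} (h : IsHNode H η) :
    IsHNode H (π.apply η) := by
  intro i hi
  rw [π.length_apply] at hi
  rw [List.getD_eq_getElem _ _ (by simpa [π.length_apply] using hi),
    π.getElem_apply η i hi]
  exact (π.bij i).mapsTo (by rw [← List.getD_eq_getElem _ 0 hi]; exact h i hi)

/-- Composition of coordinate-wise permutations. -/
def CWPerm.comp (π σ : CWPerm H) : CWPerm H where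
  f n := π.f n ∘ σ.f n
  bij n := (π.bij n).comp (σ.bij n)
  id_out n k hk := by
    simp only [Function.comp_apply, σ.id_out n k hk, π.id_out n k hk]

lemma CWPerm.comp_apply (π σ : CWPerm H) (η : Node) :
    (π.comp σ).apply η = π.apply (σ.apply η) := by
  apply List.ext_getElem
  · simp [CWPerm.length_apply]
  · intro i h₁ h₂
    have hi : i < η.length := by simpa [CWPerm.length_apply] using h₁
    have hi' : i < (σ.apply η).length := by simpa [CWPerm.length_apply] using h₁
    rw [(π.comp σ).getElem_apply η i hi, π.getElem_apply (σ.apply η) i hi',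
      σ.getElem_apply η i hi]
    rfl

lemma CWPerm.comp_isRat {π σ : CWPerm H} {n : ℕ} (hπ : π.IsRat n) (hσ : σ.IsRat n) :
    (π.comp σ).IsRat n := by
  intro m hm k
  simp only [CWPerm.comp, Function.comp_apply, hσ m hm, hπ m hm]

lemma CWPerm.isRat_mono {π : CWPerm H} {n m : ℕ} (h : π.IsRat n) (hnm : n ≤ m) :
    π.IsRat m := fun j hj k => h j (lt_of_le_of_lt hnm hj) k

/-- The permutation of `Fin (H i)` induced by a coordinate-wise permutation. -/
noncomputable def CWPerm.finEquiv (π : CWPerm H) (i : ℕ) : Fin (H i) ≃ Fin (H i) := by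
  refine Equiv.ofBijective (fun k => ⟨π.f i k, (π.bij i).mapsTo k.isLt⟩) ?_
  rw [← Finite.injective_iff_bijective]
  intro k₁ k₂ h
  have := (π.bij i).injOn k₁.isLt k₂.isLt (by simpa [Fin.ext_iff] using h)
  exact Fin.ext this

lemma CWPerm.finEquiv_apply (π : CWPerm H) (i : ℕ) (k : Fin (H i)) :
    (π.finEquiv i k : ℕ) = π.f i k := rfl

/-- The inverse of a coordinate-wise permutation. -/
noncomputable def CWPerm.inv (π : CWPerm H) : CWPerm H where
  f i k := if h : k < H i then ((π.finEquiv i).symm ⟨k, h⟩ : ℕ) else k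
  bij i := by
    constructor
    · intro k hk
      simp only [Set.mem_Iio] at hk ⊢
      rw [dif_pos hk]
      exact ((π.finEquiv i).symm ⟨k, hk⟩).isLt
    constructor
    · intro k₁ hk₁ k₂ hk₂ h
      simp only [Set.mem_Iio] at hk₁ hk₂
      simp only [] at h
      rw [dif_pos hk₁, dif_pos hk₂] at h
      have heq : ((π.finEquiv i).symm ⟨k₁, hk₁⟩) = ((π.finEquiv i).symm ⟨k₂, hk₂⟩) := Fin.ext h
      have := (π.finEquiv i).symm.injective.eq_iff.mp heq
      simpa [Fin.ext_iff] using this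
    · intro k hk
      simp only [Set.mem_Iio] at hk
      refine ⟨(π.finEquiv i ⟨k, hk⟩ : ℕ), (π.finEquiv i ⟨k, hk⟩).isLt, ?_⟩
      dsimp only
      rw [dif_pos (π.finEquiv i ⟨k, hk⟩).isLt]
      simp
  id_out i k hk := dif_neg (not_lt.mpr hk)

lemma CWPerm.inv_f_f (π : CWPerm H) (i k : ℕ) (hk : k < H i) :
    π.inv.f i (π.f i k) = k := by
  have h1 : π.f i k < H i := (π.bij i).mapsTo hk
  show (if h : π.f i k < H i then ((π.finEquiv i).symm ⟨π.f i k, h⟩ : ℕ) else π.f i k) = k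
  rw [dif_pos h1]
  have : (⟨π.f i k, h1⟩ : Fin (H i)) = π.finEquiv i ⟨k, hk⟩ := rfl
  rw [this, Equiv.symm_apply_apply]

lemma CWPerm.f_inv_f (π : CWPerm H) (i k : ℕ) (hk : k < H i) :
    π.f i (π.inv.f i k) = k := by
  show π.f i (if h : k < H i then ((π.finEquiv i).symm ⟨k, h⟩ : ℕ) else k) = k
  rw [dif_pos hk]
  exact congrArg (fun x : Fin (H i) => (x : ℕ))
    (Equiv.apply_symm_apply (π.finEquiv i) ⟨k, hk⟩)

lemma CWPerm.inv_isRat {π : CWPerm H} {n : ℕ} (h : π.IsRat n) : π.inv.IsRat n := by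
  intro m hm k
  show (if hk : k < H m then ((π.finEquiv m).symm ⟨k, hk⟩ : ℕ) else k) = k
  split
  · rename_i hk
    have : π.finEquiv m ⟨k, hk⟩ = ⟨k, hk⟩ := Fin.ext (by simpa [CWPerm.finEquiv_apply] using h m hm k)
    conv_lhs => rw [← this, Equiv.symm_apply_apply]
  · rfl

lemma CWPerm.inv_apply_apply (π : CWPerm H) {η : Node} (h : IsHNode H η) :
    π.inv.apply (π.apply η) = η := by
  apply List.ext_getElem
  · simp [CWPerm.length_apply]
  · intro i h₁ h₂
    have hi : i < (π.apply η).length := by simpa [CWPerm.length_apply] using h₂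
    rw [π.inv.getElem_apply (π.apply η) i hi, π.getElem_apply η i h₂]
    exact π.inv_f_f i _ (by rw [← List.getD_eq_getElem _ 0 h₂]; exact h i h₂)

lemma CWPerm.apply_inv_apply (π : CWPerm H) {η : Node} (h : IsHNode H η) :
    π.apply (π.inv.apply η) = η := by
  apply List.ext_getElem
  · simp [CWPerm.length_apply]
  · intro i h₁ h₂
    have hi : i < (π.inv.apply η).length := by simpa [CWPerm.length_apply] using h₂
    rw [π.getElem_apply (π.inv.apply η) i hi, π.inv.getElem_apply η i h₂]
    exact π.f_inv_f i _ (by rw [← List.getD_eq_getElem _ 0 h₂]; exact h i h₂)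

/-- Existence of an involutive `n`-coordinate-wise permutation mapping one `H`-node
to another of the same length `≤ n+1`. -/
lemma exists_swap_perm (hH : ∀ n, 2 ≤ H n) {ν₀ ν₁ : Node} {n : ℕ}
    (h₀ : IsHNode H ν₀) (h₁ : IsHNode H ν₁) (hl : ν₀.length = ν₁.length)
    (hn : ν₀.length ≤ n + 1) :
    ∃ π : CWPerm H, π.IsRat n ∧ π.apply ν₀ = ν₁ ∧
      ∀ μ : Node, π.apply (π.apply μ) = μ := by
  have hbnd : ∀ i, ν₀.getD i 0 < H i ∧ ν₁.getD i 0 < H i := by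
    intro i
    rcases lt_or_ge i ν₀.length with hi | hi
    · exact ⟨h₀ i hi, h₁ i (hl ▸ hi)⟩
    · rw [List.getD_eq_default _ _ hi, List.getD_eq_default _ _ (hl ▸ hi)]
      have := hH i; omega
  refine ⟨⟨fun i => Equiv.swap (ν₀.getD i 0) (ν₁.getD i 0), ?_, ?_⟩, ?_, ?_, ?_⟩
  · intro i
    have hmt : Set.MapsTo (Equiv.swap (ν₀.getD i 0) (ν₁.getD i 0)) (Set.Iio (H i))
        (Set.Iio (H i)) := by
      intro k hk
      simp only [Set.mem_Iio] at hk ⊢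
      rcases eq_or_ne k (ν₀.getD i 0) with rfl | hk0
      · rw [Equiv.swap_apply_left]; exact (hbnd i).2
      rcases eq_or_ne k (ν₁.getD i 0) with rfl | hk1
      · rw [Equiv.swap_apply_right]; exact (hbnd i).1
      · rw [Equiv.swap_apply_of_ne_of_ne hk0 hk1]; exact hk
    refine ⟨hmt, fun k₁ _ k₂ _ h => (Equiv.swap _ _).injective h, ?_⟩
    intro k hk
    exact ⟨Equiv.swap (ν₀.getD i 0) (ν₁.getD i 0) k, hmt hk, Equiv.swap_apply_self _ _ _⟩
  · intro i k hk
    exact Equiv.swap_apply_of_ne_of_ne (by have := (hbnd i).1; omega)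
      (by have := (hbnd i).2; omega)
  · intro m hm k
    have hm' : ν₀.length ≤ m := by omega
    simp only [List.getD_eq_default _ _ hm', List.getD_eq_default _ _ (hl ▸ hm')]
    rw [Equiv.swap_self]
    rfl
  · apply List.ext_getElem
    · simp [CWPerm.length_apply, hl]
    · intro i hi₁ hi₂
      have hi : i < ν₀.length := by
        simpa [CWPerm.length_apply] using hi₁
      rw [CWPerm.getElem_apply _ ν₀ i hi]
      simp only [List.getD_eq_getElem _ 0 hi, List.getD_eq_getElem _ 0 hi₂]
      exact Equiv.swap_apply_left _ _
  · intro μ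
    apply List.ext_getElem
    · simp [CWPerm.length_apply]
    · intro i hi₁ hi₂
      rw [CWPerm.getElem_apply _ _ i (by simpa [CWPerm.length_apply] using hi₂),
        CWPerm.getElem_apply _ μ i hi₂]
      exact Equiv.swap_apply_self _ _ _

lemma prefix_length_lt {η ν : Node} (h : η <+: ν) (hne : η ≠ ν) :
    η.length < ν.length := by
  rcases h.length_le.lt_or_eq with h' | h'
  · exact h'
  · exact absurd (h.eq_of_length h') hne

lemma IsInfTree.exists_len_add {T : Set Node} (hT : IsInfTree H T) :
    ∀ d, ∀ η ∈ T, ∃ ν ∈ T, η <+: ν ∧ ν.length = η.length + d := by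
  intro d
  induction d with
  | zero => exact fun η hη => ⟨η, hη, List.prefix_refl _, rfl⟩
  | succ d ih =>
    intro η hη
    obtain ⟨ν, hν, hpre, hlen⟩ := ih η hη
    obtain ⟨ν', hν', hpre', hne⟩ := hT.2.2 ν hν
    have hlt : ν.length < ν'.length := prefix_length_lt hpre' hne
    refine ⟨ν'.take (η.length + d + 1), hT.1.2 ν' hν' _ (List.take_prefix _ _), ?_, ?_⟩
    · rw [List.prefix_take_iff]
      exact ⟨hpre.trans hpre', by have := hpre.length_le; omega⟩
    · rw [List.length_take]; omega

lemma IsInfTree.exists_len {T : Set Node} (hT : IsInfTree H T) {η : Node} (hη : η ∈ T)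
    {m : ℕ} (hm : η.length ≤ m) : ∃ ν ∈ T, η <+: ν ∧ ν.length = m := by
  obtain ⟨ν, hν, h1, h2⟩ := hT.exists_len_add (m - η.length) η hη
  exact ⟨ν, hν, h1, by omega⟩

lemma IsInfTree.levelSet_nonempty {T : Set Node} (hT : IsInfTree H T) (n : ℕ) :
    ∃ ν, ν ∈ levelSet T n := by
  obtain ⟨ν, hν, _, h2⟩ := hT.exists_len hT.1.1 (Nat.zero_le n)
  exact ⟨ν, hν, h2⟩

lemma IsInfTree.finTree_below {T : Set Node} (hT : IsInfTree H T) (n : ℕ) :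
    IsFinTree H (below T n) n := by
  refine ⟨⟨⟨hT.1.1, by simp⟩, ?_⟩, ?_, ?_⟩
  · rintro η ⟨hη, hlen⟩ ν hpre
    exact ⟨hT.1.2 η hη ν hpre, le_trans hpre.length_le hlen⟩
  · rintro η ⟨hη, hlen⟩
    exact ⟨hT.2.1 η hη, hlen⟩
  · rintro η ⟨hη, hlen⟩
    obtain ⟨ν, hν, h1, h2⟩ := hT.exists_len hη hlen
    exact ⟨ν, ⟨hν, le_of_eq h2⟩, h1, h2⟩

lemma below_union (T₁ T₂ : Set Node) (n : ℕ) :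
    below (T₁ ∪ T₂) n = below T₁ n ∪ below T₂ n := by
  ext η; simp [below]

lemma levelSet_union (T₁ T₂ : Set Node) (n : ℕ) :
    levelSet (T₁ ∪ T₂) n = levelSet T₁ n ∪ levelSet T₂ n := by
  ext η; simp [levelSet]

lemma levelSet_subset_below (T : Set Node) (n : ℕ) : levelSet T n ⊆ below T n :=
  fun η ⟨h1, h2⟩ => ⟨h1, le_of_eq h2⟩

lemma below_mono {T₁ T₂ : Set Node} (h : T₁ ⊆ T₂) (n : ℕ) : below T₁ n ⊆ below T₂ n :=
  fun η ⟨h1, h2⟩ => ⟨h h1, h2⟩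

lemma levelSet_mono {T₁ T₂ : Set Node} (h : T₁ ⊆ T₂) (n : ℕ) :
    levelSet T₁ n ⊆ levelSet T₂ n := fun η ⟨h1, h2⟩ => ⟨h h1, h2⟩

lemma below_of_below {T₁ T₂ : Set Node} {m n : ℕ} (hmn : n ≤ m)
    (h : below T₁ m = below T₂ m) : below T₁ n = below T₂ n := by
  ext η
  constructor
  · rintro ⟨h1, h2⟩
    have : η ∈ below T₂ m := h ▸ (⟨h1, le_trans h2 hmn⟩ : η ∈ below T₁ m)
    exact ⟨this.1, h2⟩
  · rintro ⟨h1, h2⟩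
    have : η ∈ below T₁ m := h.symm ▸ (⟨h1, le_trans h2 hmn⟩ : η ∈ below T₂ m)
    exact ⟨this.1, h2⟩

lemma levelSet_eq_of_below_eq {T₁ T₂ : Set Node} {m n : ℕ} (hmn : n ≤ m)
    (h : below T₁ m = below T₂ m) : levelSet T₁ n = levelSet T₂ n := by
  have h' := below_of_below le_rfl (below_of_below hmn h)
  ext η
  constructor
  · rintro ⟨h1, h2⟩
    have : η ∈ below T₂ n := h' ▸ (⟨h1, le_of_eq h2⟩ : η ∈ below T₁ n)
    exact ⟨this.1, h2⟩
  · rintro ⟨h1, h2⟩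
    have : η ∈ below T₁ n := h'.symm ▸ (⟨h1, le_of_eq h2⟩ : η ∈ below T₂ n)
    exact ⟨this.1, h2⟩

lemma CWPerm.apply_nil (π : CWPerm H) : π.apply ([] : Node) = [] := rfl

lemma below_image (π : CWPerm H) (T : Set Node) (n : ℕ) :
    below (π.apply '' T) n = π.apply '' below T n := by
  ext η
  constructor
  · rintro ⟨⟨μ, hμ, rfl⟩, hlen⟩
    exact ⟨μ, ⟨hμ, by rwa [π.length_apply] at hlen⟩, rfl⟩
  · rintro ⟨μ, ⟨hμ, hlen⟩, rfl⟩
    exact ⟨⟨μ, hμ, rfl⟩, by rwa [π.length_apply]⟩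

lemma IsInfTree.image {T : Set Node} (hT : IsInfTree H T) (π : CWPerm H) :
    IsInfTree H (π.apply '' T) := by
  refine ⟨⟨⟨[], hT.1.1, π.apply_nil⟩, ?_⟩, ?_, ?_⟩
  · rintro η ⟨μ, hμ, rfl⟩ ν hpre
    have hν : ν = (π.apply μ).take ν.length := List.prefix_iff_eq_take.mp hpre
    refine ⟨μ.take ν.length, hT.1.2 μ hμ _ (List.take_prefix _ _), ?_⟩
    rw [π.apply_take, ← hν]
  · rintro η ⟨μ, hμ, rfl⟩
    exact π.apply_hnode (hT.2.1 μ hμ)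
  · rintro η ⟨μ, hμ, rfl⟩
    obtain ⟨μ', hμ', hpre, hne⟩ := hT.2.2 μ hμ
    refine ⟨π.apply μ', ⟨μ', hμ', rfl⟩, π.apply_prefix hpre, ?_⟩
    intro h
    have := congrArg List.length h
    rw [π.length_apply, π.length_apply] at this
    exact absurd (hpre.eq_of_length this) hne

lemma image_inv_apply (π : CWPerm H) {A : Set Node} (hA : ∀ η ∈ A, IsHNode H η) :
    π.inv.apply '' (π.apply '' A) = A := by
  ext η
  constructor
  · rintro ⟨_, ⟨μ, hμ, rfl⟩, rfl⟩
    rwa [π.inv_apply_apply (hA μ hμ)]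
  · intro hη
    exact ⟨π.apply η, ⟨η, hη, rfl⟩, π.inv_apply_apply (hA η hη)⟩

lemma image_apply_inv (π : CWPerm H) {A : Set Node} (hA : ∀ η ∈ A, IsHNode H η) :
    π.apply '' (π.inv.apply '' A) = A := by
  ext η
  constructor
  · rintro ⟨_, ⟨μ, hμ, rfl⟩, rfl⟩
    rwa [π.apply_inv_apply (hA μ hμ)]
  · intro hη
    exact ⟨π.inv.apply η, ⟨η, hη, rfl⟩, π.apply_inv_apply (hA η hη)⟩

lemma hnode_level_finite (H : ℕ → ℕ) (l : ℕ) :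
    {η : Node | IsHNode H η ∧ η.length = l}.Finite := by
  set B := (Finset.range l).sup H with hB
  have : {η : Node | IsHNode H η ∧ η.length = l} ⊆
      Set.range (fun f : Fin l → Fin (B + 1) => List.ofFn (fun i => (f i : ℕ))) := by
    rintro η ⟨hη, hlen⟩
    have hbd : ∀ i (hi : i < η.length), η[i] < B + 1 := by
      intro i hi
      have h1 : η.getD i 0 < H i := hη i hi
      have h2 : H i ≤ B := Finset.le_sup (by simp [hlen ▸ hi])
      rw [List.getD_eq_getElem _ 0 hi] at h1
      omega
    refine ⟨fun i => ⟨η[i]'(by omega), hbd _ (by omega)⟩, ?_⟩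
    apply List.ext_getElem
    · simp [hlen]
    · intro n h₁ h₂
      simp
  exact Set.Finite.subset (Set.finite_range _) this

lemma levelSet_finite {T : Set Node} (hT : ∀ η ∈ T, IsHNode H η) (l : ℕ) :
    (levelSet T l).Finite := by
  apply (hnode_level_finite H l).subset
  rintro η ⟨h1, h2⟩
  exact ⟨hT η h1, h2⟩

lemma IsInfTree.union {T₁ T₂ : Set Node} (h₁ : IsInfTree H T₁) (h₂ : IsInfTree H T₂) :
    IsInfTree H (T₁ ∪ T₂) := by
  refine ⟨⟨Or.inl h₁.1.1, ?_⟩, ?_, ?_⟩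
  · rintro η (hη | hη) ν hpre
    · exact Or.inl (h₁.1.2 η hη ν hpre)
    · exact Or.inr (h₂.1.2 η hη ν hpre)
  · rintro η (hη | hη)
    · exact h₁.2.1 η hη
    · exact h₂.2.1 η hη
  · rintro η (hη | hη)
    · obtain ⟨ν, hν, h1, h2⟩ := h₁.2.2 η hη
      exact ⟨ν, Or.inl hν, h1, h2⟩
    · obtain ⟨ν, hν, h1, h2⟩ := h₂.2.2 η hη
      exact ⟨ν, Or.inr hν, h1, h2⟩

lemma narrow_subtree (p : UnivParam H) {T T' : Set Node} (hT : IsInfTree H T)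
    (hT' : IsInfTree H T') (hsub : T' ⊆ T) (hn : IsNarrowG p.G T) : IsNarrowG p.G T' := by
  intro m
  obtain ⟨a, ham, b, hab, hG⟩ := hn m
  refine ⟨a, ham, b, hab, ?_⟩
  exact p.G_mono _ a b (b + 1) _ (b + 1) hG (hT.finTree_below (b + 1))
    (hT'.finTree_below (b + 1)) le_rfl
    (fun η h => ⟨hsub h.1.1, h.1.2⟩) a b le_rfl le_rfl
    (by omega)

lemma narrow_image (p : UnivParam H) (hreg : RegularParam p) {T : Set Node}
    (hn : IsNarrowG p.G T) (π : CWPerm H) {n : ℕ} (hrat : π.IsRat n) :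
    IsNarrowG p.G (π.apply '' T) := by
  intro m
  obtain ⟨a, ham, b, hab, hG⟩ := hn m
  refine ⟨a, ham, b, hab, ?_⟩
  rw [below_image]
  exact hreg.2 π ⟨n, hrat⟩ _ a b hG

lemma narrow_union_two (p : UnivParam H) {T₁ T₂ : Set Node} (h₁ : IsInfTree H T₁)
    (h₂ : IsInfTree H T₂) (hn₁ : IsNarrowG p.G T₁) (hn₂ : IsNarrowG p.G T₂) :
    IsNarrowG p.G (T₁ ∪ T₂) := by
  intro m
  obtain ⟨a₀, ha₀, b₀, hab₀, hG₀⟩ := hn₁ (m + 1)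
  obtain ⟨a₁, ha₁, b₁, hab₁, hG₁⟩ := hn₂ (b₀ + 1)
  set N := max (p.F b₁ + 1) (b₁ + 2) with hN
  have hb₀N : b₀ + 1 ≤ N := by omega
  have hb₁N : b₁ + 1 ≤ N := by omega
  have hG₀N : (below T₁ N, a₀, b₀) ∈ p.G :=
    p.G_mono _ a₀ b₀ (b₀ + 1) _ N hG₀ (h₁.finTree_below _) (h₁.finTree_below _) hb₀N
      (fun η h => ⟨h.1.1, le_of_eq h.2⟩) a₀ b₀ le_rfl le_rfl (by omega)
  have hG₁N : (below T₂ N, a₁, b₁) ∈ p.G :=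
    p.G_mono _ a₁ b₁ (b₁ + 1) _ N hG₁ (h₂.finTree_below _) (h₂.finTree_below _) hb₁N
      (fun η h => ⟨h.1.1, le_of_eq h.2⟩) a₁ b₁ le_rfl le_rfl (by omega)
  obtain ⟨S', hS'G, hS'fin, hS'sub, _⟩ :=
    p.G_amalg (below T₁ N) a₀ b₀ (below T₂ N) a₁ b₁ N (below (T₁ ∪ T₂) m) m
      hG₀N hG₁N (h₁.finTree_below N) (h₂.finTree_below N)
      ((h₁.union h₂).finTree_below m) (by omega)
      (fun η h => ⟨Or.inl h.1.1, le_of_eq h.2⟩)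
      (fun η h => ⟨Or.inr h.1.1, le_of_eq h.2⟩)
      (by omega) (by omega) (by omega)
  refine ⟨a₀, by omega, N - 1, by omega, ?_⟩
  have hN1 : N - 1 + 1 = N := by omega
  rw [hN1]
  refine p.G_mono S' a₀ (p.F b₁) N _ N hS'G hS'fin ((h₁.union h₂).finTree_below N) le_rfl
    ?_ a₀ (N - 1) le_rfl (by omega) (by omega)
  rintro η ⟨hη, hlen⟩
  rcases hη.1 with h | h
  · exact hS'sub (Or.inl ⟨h, le_of_eq hlen⟩)
  · exact hS'sub (Or.inr ⟨h, le_of_eq hlen⟩)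

lemma narrow_foldr (p : UnivParam H) :
    ∀ l : List (Set Node), (∀ T ∈ l, IsInfTree H T ∧ IsNarrowG p.G T) →
    ∀ T₀ : Set Node, IsInfTree H T₀ → IsNarrowG p.G T₀ →
      IsInfTree H (l.foldr (· ∪ ·) T₀) ∧ IsNarrowG p.G (l.foldr (· ∪ ·) T₀) := by
  intro l
  induction l with
  | nil => exact fun _ T₀ h1 h2 => ⟨h1, h2⟩
  | cons T l ih =>
    intro hl T₀ h1 h2
    have hT := hl T List.mem_cons_self
    obtain ⟨ih1, ih2⟩ := ih (fun S hS => hl S (List.mem_cons_of_mem _ hS)) T₀ h1 h2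
    exact ⟨hT.1.union ih1, narrow_union_two p hT.1 ih1 hT.2 ih2⟩

lemma foldr_union_eq (l : List (Set Node)) (T₀ : Set Node) :
    l.foldr (· ∪ ·) T₀ = T₀ ∪ {η | ∃ T ∈ l, η ∈ T} := by
  induction l with
  | nil => simp
  | cons T l ih =>
    simp only [List.foldr_cons, ih]
    ext η
    simp only [Set.mem_union, Set.mem_setOf_eq, List.mem_cons]
    constructor
    · rintro (h | h | ⟨S, hS, h⟩)
      · exact Or.inr ⟨T, Or.inl rfl, h⟩
      · exact Or.inl h
      · exact Or.inr ⟨S, Or.inr hS, h⟩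
    · rintro (h | ⟨S, rfl | hS, h⟩)
      · exact Or.inr (Or.inl h)
      · exact Or.inl h
      · exact Or.inr (Or.inr ⟨S, hS, h⟩)

lemma narrow_finset_union (p : UnivParam H) {ι : Type*} (I : Finset ι) (g : ι → Set Node)
    (T₀ : Set Node) (h₀i : IsInfTree H T₀) (h₀n : IsNarrowG p.G T₀)
    (hg : ∀ i ∈ I, IsInfTree H (g i) ∧ IsNarrowG p.G (g i)) :
    IsInfTree H (T₀ ∪ ⋃ i ∈ I, g i) ∧ IsNarrowG p.G (T₀ ∪ ⋃ i ∈ I, g i) := by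
  have hset : T₀ ∪ ⋃ i ∈ I, g i = (I.toList.map g).foldr (· ∪ ·) T₀ := by
    rw [foldr_union_eq]
    congr 1
    ext η
    simp only [Set.mem_iUnion, Set.mem_setOf_eq, List.mem_map, Finset.mem_toList]
    constructor
    · rintro ⟨i, hi, h⟩
      exact ⟨g i, ⟨i, hi, rfl⟩, h⟩
    · rintro ⟨S, ⟨i, hi, rfl⟩, h⟩
      exact ⟨i, hi, h⟩
  rw [hset]
  refine narrow_foldr p _ ?_ T₀ h₀i h₀n
  rintro S hS
  rw [List.mem_map] at hS
  obtain ⟨i, hi, rfl⟩ := hS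
  exact hg i (Finset.mem_toList.mp hi)

lemma IsHNode.of_prefix {η ν : Node} (h : IsHNode H η) (hpre : ν <+: η) :
    IsHNode H ν := by
  intro i hi
  have hiη : i < η.length := lt_of_lt_of_le hi hpre.length_le
  rw [List.getD_eq_getElem _ 0 hi, hpre.getElem hi]
  rw [← List.getD_eq_getElem _ 0 hiη]
  exact h i hiη

/-- The identity coordinate-wise permutation. -/
def idCW (H : ℕ → ℕ) : CWPerm H where
  f _ k := k
  bij n := Set.bijOn_id _
  id_out _ _ _ := rfl

lemma idCW_apply (η : Node) : (idCW H).apply η = η := by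
  apply List.ext_getElem
  · simp [CWPerm.length_apply]
  · intro i h₁ h₂
    rw [CWPerm.getElem_apply _ η i h₂]
    rfl

lemma idCW_isRat (n : ℕ) : (idCW H).IsRat n := fun _ _ _ => rfl

/-- Standard `n`-coordinate-wise permutations: a finite type. -/
def StdPerm (H : ℕ → ℕ) (n : ℕ) := (i : Fin (n + 1)) → Equiv.Perm (Fin (H i))

noncomputable instance (n : ℕ) : Fintype (StdPerm H n) := by
  unfold StdPerm
  classical
  infer_instance

/-- Interpret a standard permutation as a coordinate-wise permutation. -/
def StdPerm.toCW {n : ℕ} (s : StdPerm H n) : CWPerm H where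
  f i k := if h : i < n + 1 then (if hk : k < H i then (s ⟨i, h⟩ ⟨k, hk⟩ : ℕ) else k) else k
  bij i := by
    by_cases h : i < n + 1
    · simp only [dif_pos h]
      refine ⟨?_, ?_, ?_⟩
      · intro k hk
        simp only [Set.mem_Iio] at hk ⊢
        rw [dif_pos hk]
        exact (s ⟨i, h⟩ ⟨k, hk⟩).isLt
      · intro k₁ hk₁ k₂ hk₂ hke
        simp only [Set.mem_Iio] at hk₁ hk₂
        dsimp only at hke
        rw [dif_pos hk₁, dif_pos hk₂] at hke
        have := (s ⟨i, h⟩).injective (Fin.ext hke : (s ⟨i, h⟩) ⟨k₁, hk₁⟩ = (s ⟨i, h⟩) ⟨k₂, hk₂⟩)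
        simpa [Fin.ext_iff] using this
      · intro k hk
        simp only [Set.mem_Iio] at hk
        refine ⟨((s ⟨i, h⟩).symm ⟨k, hk⟩ : ℕ), ((s ⟨i, h⟩).symm ⟨k, hk⟩).isLt, ?_⟩
        dsimp only
        rw [dif_pos ((s ⟨i, h⟩).symm ⟨k, hk⟩).isLt]
        simp
    · simp only [dif_neg h]
      exact Set.bijOn_id _
  id_out i k hk := by
    dsimp only
    by_cases h : i < n + 1
    · rw [dif_pos h, dif_neg (not_lt.mpr hk)]
    · rw [dif_neg h]

lemma StdPerm.toCW_isRat {n : ℕ} (s : StdPerm H n) : s.toCW.IsRat n := by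
  intro m hm k
  show (if h : m < n + 1 then _ else k) = k
  rw [dif_neg (by omega)]

/-- Every rational permutation agrees with a standard one on `H`-nodes. -/
lemma exists_std {n : ℕ} (π : CWPerm H) (hrat : π.IsRat n) :
    ∃ s : StdPerm H n, ∀ η : Node, IsHNode H η → s.toCW.apply η = π.apply η := by
  refine ⟨fun i => π.finEquiv i, ?_⟩
  intro η hη
  apply List.ext_getElem
  · simp [CWPerm.length_apply]
  · intro i h₁ h₂
    have hi : i < η.length := by simpa [CWPerm.length_apply] using h₁
    rw [CWPerm.getElem_apply _ η i hi, CWPerm.getElem_apply _ η i hi]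
    have hval : η[i] < H i := by
      rw [← List.getD_eq_getElem _ 0 hi]; exact hη i hi
    show (if h : i < n + 1 then _ else η[i]) = π.f i η[i]
    by_cases h : i < n + 1
    · rw [dif_pos h, dif_pos hval]
      rfl
    · rw [dif_neg h]
      exact (hrat i (by omega) _).symm

/-- Homogeneity of a tree at level `n+1` under `n`-rational permutations. -/
def HomAt (H : ℕ → ℕ) (T : Set Node) (n : ℕ) : Prop :=
  ∀ ν₀ ∈ levelSet T (n + 1), ∀ ν₁ ∈ levelSet T (n + 1), ∀ σ : CWPerm H, σ.IsRat n →
    σ.apply ν₀ = ν₁ → σ.apply '' aboveNode T ν₀ = aboveNode T ν₁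

lemma homAt_of_incl {T : Set Node} {n : ℕ} (hhn : ∀ η ∈ T, IsHNode H η)
    (h : ∀ ν₀ ∈ levelSet T (n + 1), ∀ ν₁ ∈ levelSet T (n + 1), ∀ σ : CWPerm H,
      σ.IsRat n → σ.apply ν₀ = ν₁ → σ.apply '' aboveNode T ν₀ ⊆ aboveNode T ν₁) :
    HomAt H T n := by
  intro ν₀ hν₀ ν₁ hν₁ σ hσ hσν
  refine Set.Subset.antisymm (h ν₀ hν₀ ν₁ hν₁ σ hσ hσν) ?_
  have hinv : σ.inv.apply ν₁ = ν₀ := by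
    rw [← hσν, σ.inv_apply_apply (hhn ν₀ hν₀.1)]
  have h2 := h ν₁ hν₁ ν₀ hν₀ σ.inv (CWPerm.inv_isRat hσ) hinv
  have habove : ∀ η ∈ aboveNode T ν₁, IsHNode H η := fun η hη => hhn η hη.1
  calc aboveNode T ν₁ = σ.apply '' (σ.inv.apply '' aboveNode T ν₁) :=
        (image_apply_inv σ habove).symm
    _ ⊆ σ.apply '' aboveNode T ν₀ := Set.image_mono h2

/-- The closure of `T` under `n`-rational permutations at level `n+1`. -/
def clTree (H : ℕ → ℕ) (T : Set Node) (n : ℕ) : Set Node :=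
  T ∪ {η | ∃ π : CWPerm H, π.IsRat n ∧ ∃ ν ∈ levelSet T (n + 1), π.apply ν ∈ T ∧
    η ∈ π.apply '' aboveNode T ν}

lemma mem_clTree {T : Set Node} {n : ℕ} {η : Node} :
    η ∈ clTree H T n ↔ η ∈ T ∨ ∃ π : CWPerm H, π.IsRat n ∧ ∃ ν ∈ levelSet T (n + 1),
      π.apply ν ∈ T ∧ η ∈ π.apply '' aboveNode T ν := Iff.rfl

lemma subset_clTree (T : Set Node) (n : ℕ) : T ⊆ clTree H T n := fun _ h => Or.inl h

lemma below_clTree {T : Set Node} (n : ℕ) :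
    below (clTree H T n) (n + 1) = below T (n + 1) := by
  ext η
  constructor
  · rintro ⟨hη, hlen⟩
    rcases hη with hη | ⟨π, hrat, ν, hν, hπν, μ, hμ, rfl⟩
    · exact ⟨hη, hlen⟩
    · have hl1 : μ.length = n + 1 := by
        rw [π.length_apply] at hlen
        have := hμ.2.length_le
        rw [hν.2] at this
        omega
      have hμν : μ = ν := (hμ.2.eq_of_length (by rw [hl1, hν.2])).symm
      exact ⟨hμν ▸ hπν, hlen⟩
  · rintro ⟨hη, hlen⟩
    exact ⟨Or.inl hη, hlen⟩

lemma levelSet_clTree {T : Set Node} (n : ℕ) {m : ℕ} (hm : m ≤ n + 1) :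
    levelSet (clTree H T n) m = levelSet T m :=
  levelSet_eq_of_below_eq hm (below_clTree n)

lemma clTree_isInfTree {T : Set Node} (hT : IsInfTree H T) (n : ℕ) :
    IsInfTree H (clTree H T n) := by
  refine ⟨⟨Or.inl hT.1.1, ?_⟩, ?_, ?_⟩
  · rintro η (hη | ⟨π, hrat, ν, hν, hπν, μ, hμ, rfl⟩) κ hpre
    · exact Or.inl (hT.1.2 η hη κ hpre)
    · rcases le_or_gt κ.length (n + 1) with hκ | hκ
      · have hπν' : π.apply ν <+: π.apply μ := π.apply_prefix hμ.2
        have : κ <+: π.apply ν :=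
          List.prefix_of_prefix_length_le hpre hπν' (by rw [π.length_apply, hν.2]; exact hκ)
        exact Or.inl (hT.1.2 _ hπν κ this)
      · refine Or.inr ⟨π, hrat, ν, hν, hπν, μ.take κ.length,
          ⟨hT.1.2 μ hμ.1 _ (List.take_prefix _ _), ?_⟩, ?_⟩
        · rw [List.prefix_take_iff]
          exact ⟨hμ.2, by rw [hν.2]; omega⟩
        · rw [π.apply_take]
          exact (List.prefix_iff_eq_take.mp hpre).symm
  · rintro η (hη | ⟨π, _, ν, _, _, μ, hμ, rfl⟩)
    · exact hT.2.1 η hη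
    · exact π.apply_hnode (hT.2.1 μ hμ.1)
  · rintro η (hη | ⟨π, hrat, ν, hν, hπν, μ, hμ, rfl⟩)
    · obtain ⟨κ, hκ, h1, h2⟩ := hT.2.2 η hη
      exact ⟨κ, Or.inl hκ, h1, h2⟩
    · obtain ⟨μ', hμ', h1, h2⟩ := hT.2.2 μ hμ.1
      refine ⟨π.apply μ', Or.inr ⟨π, hrat, ν, hν, hπν, μ', ⟨hμ', hμ.2.trans h1⟩, rfl⟩,
        π.apply_prefix h1, ?_⟩
      intro hc
      have := congrArg List.length hc
      rw [π.length_apply, π.length_apply] at this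
      exact h2 (h1.eq_of_length this)

lemma aboveNode_clTree {T : Set Node} (hT : IsInfTree H T) {n : ℕ} {ν₀ : Node}
    (hν₀ : ν₀ ∈ levelSet T (n + 1)) :
    aboveNode (clTree H T n) ν₀ = {η | ∃ π : CWPerm H, π.IsRat n ∧
      ∃ ν ∈ levelSet T (n + 1), π.apply ν = ν₀ ∧ η ∈ π.apply '' aboveNode T ν} := by
  ext η
  constructor
  · rintro ⟨hη | ⟨π, hrat, ν, hν, hπν, μ, hμ, rfl⟩, hpre⟩
    · exact ⟨idCW H, idCW_isRat n, ν₀, hν₀, idCW_apply ν₀, η, ⟨hη, hpre⟩, idCW_apply η⟩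
    · have hπν' : π.apply ν <+: π.apply μ := π.apply_prefix hμ.2
      have hlen : ν₀.length = (π.apply ν).length := by
        rw [π.length_apply, hν.2, hν₀.2]
      have heq : π.apply ν = ν₀ :=
        ((List.prefix_of_prefix_length_le hpre hπν' (le_of_eq hlen)).eq_of_length
          hlen).symm
      exact ⟨π, hrat, ν, hν, heq, μ, hμ, rfl⟩
  · rintro ⟨π, hrat, ν, hν, hπν, μ, hμ, rfl⟩
    refine ⟨Or.inr ⟨π, hrat, ν, hν, hπν ▸ hν₀.1, μ, hμ, rfl⟩, ?_⟩
    rw [← hπν]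
    exact π.apply_prefix hμ.2

lemma clTree_homAt {T : Set Node} (hT : IsInfTree H T) (n : ℕ) :
    HomAt H (clTree H T n) n := by
  apply homAt_of_incl (clTree_isInfTree hT n).2.1
  intro ν₀ hν₀ ν₁ hν₁ σ hσ hσν
  rw [levelSet_clTree n le_rfl] at hν₀ hν₁
  rw [aboveNode_clTree hT hν₀, aboveNode_clTree hT hν₁]
  rintro η ⟨κ, ⟨π, hrat, ν, hν, hπν, μ, hμ, rfl⟩, rfl⟩
  refine ⟨σ.comp π, CWPerm.comp_isRat hσ hrat, ν, hν, ?_, μ, hμ, CWPerm.comp_apply σ π μ⟩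
  rw [CWPerm.comp_apply σ π, hπν, hσν]

lemma clTree_homAt_preserve {T : Set Node} (hT : IsInfTree H T) {n m : ℕ} (hmn : m ≤ n)
    (hHom : HomAt H T m) : HomAt H (clTree H T n) m := by
  apply homAt_of_incl (clTree_isInfTree hT n).2.1
  intro ν₀ hν₀ ν₁ hν₁ σ hσ hσν
  rw [levelSet_clTree n (by omega)] at hν₀ hν₁
  rintro η ⟨κ, hκ, rfl⟩
  obtain ⟨hκmem, hκpre⟩ := hκ
  rcases hκmem with hκT | ⟨π, hrat, ν, hν, hπν, μ, hμ, rfl⟩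
  · have : σ.apply κ ∈ aboveNode T ν₁ := by
      rw [← hHom ν₀ hν₀ ν₁ hν₁ σ hσ hσν]
      exact ⟨κ, ⟨hκT, hκpre⟩, rfl⟩
    exact ⟨Or.inl this.1, this.2⟩
  · have hπν' : π.apply ν <+: π.apply μ := π.apply_prefix hμ.2
    have hν₀πν : ν₀ <+: π.apply ν :=
      List.prefix_of_prefix_length_le hκpre hπν'
        (by rw [π.length_apply, hν.2, hν₀.2]; omega)
    have hσπν : σ.apply (π.apply ν) ∈ aboveNode T ν₁ := by
      rw [← hHom ν₀ hν₀ ν₁ hν₁ σ hσ hσν]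
      exact ⟨π.apply ν, ⟨hπν, hν₀πν⟩, rfl⟩
    have hσπνlev : σ.apply (π.apply ν) ∈ levelSet T (n + 1) := by
      refine ⟨hσπν.1, ?_⟩
      rw [σ.length_apply, π.length_apply, hν.2]
    refine ⟨Or.inr ⟨σ.comp π, CWPerm.comp_isRat (CWPerm.isRat_mono hσ hmn) hrat, ν, hν, ?_,
      μ, hμ, CWPerm.comp_apply σ π μ⟩, ?_⟩
    · rw [CWPerm.comp_apply σ π]
      exact hσπνlev.1
    · rw [← hσν]
      exact σ.apply_prefix hκpre

lemma clTree_narrow (p : UnivParam H) (hreg : RegularParam p) {T : Set Node}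
    (hT : IsInfTree H T) (hTn : IsNarrowG p.G T) (n : ℕ) :
    IsNarrowG p.G (clTree H T n) := by
  classical
  set L : Finset Node := (levelSet_finite hT.2.1 (n + 1)).toFinset with hL
  set I : Finset (StdPerm H n × Node) :=
    (Finset.univ ×ˢ L).filter (fun x => (StdPerm.toCW x.1).apply x.2 ∈ T) with hI
  set g : StdPerm H n × Node → Set Node := fun x =>
    T ∪ ({μ | μ <+: (StdPerm.toCW x.1).apply x.2} ∪
      (StdPerm.toCW x.1).apply '' aboveNode T x.2) with hg
  have hEq : clTree H T n = T ∪ ⋃ x ∈ I, g x := by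
    ext η
    rw [mem_clTree]
    constructor
    · rintro (hη | ⟨π, hrat, ν, hν, hπν, μ, hμ, rfl⟩)
      · exact Or.inl hη
      · obtain ⟨s, hs⟩ := exists_std π hrat
        have hsν : s.toCW.apply ν = π.apply ν := hs ν (hT.2.1 ν hν.1)
        have hxI : (s, ν) ∈ I := by
          rw [hI, Finset.mem_filter]
          refine ⟨Finset.mem_product.mpr ⟨Finset.mem_univ _, ?_⟩, ?_⟩
          · rw [hL, Set.Finite.mem_toFinset]; exact hν
          · show (StdPerm.toCW s).apply ν ∈ T
            rw [hsν]; exact hπν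
        refine Or.inr (Set.mem_biUnion hxI ?_)
        refine Or.inr (Or.inr ⟨μ, hμ, ?_⟩)
        rw [hs μ (hT.2.1 μ hμ.1)]
    · rintro (hη | hη)
      · exact Or.inl hη
      · obtain ⟨x, hx, hηx⟩ := Set.mem_iUnion₂.mp hη
        rw [hI, Finset.mem_filter, Finset.mem_product] at hx
        obtain ⟨⟨-, hxL⟩, hxT⟩ := hx
        rw [hL, Set.Finite.mem_toFinset] at hxL
        rcases hηx with hη | hη | hη
        · exact Or.inl hη
        · -- η is a prefix of (toCW x.1).apply x.2 ∈ T
          exact Or.inl (hT.1.2 _ hxT η hη)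
        · exact Or.inr ⟨StdPerm.toCW x.1, StdPerm.toCW_isRat x.1, x.2, hxL, hxT, hη⟩
  rw [hEq]
  refine (narrow_finset_union p I g T hT hTn ?_).2
  rintro ⟨s, ν⟩ hx
  rw [hI, Finset.mem_filter, Finset.mem_product] at hx
  obtain ⟨⟨-, hxL⟩, hxT⟩ := hx
  rw [hL, Set.Finite.mem_toFinset] at hxL
  set π := StdPerm.toCW s with hπdef
  set A : Set Node := {μ | μ <+: π.apply ν} ∪ π.apply '' aboveNode T ν with hA
  have hAsub : A ⊆ π.apply '' T := by
    rintro μ (hμ | ⟨κ, hκ, rfl⟩)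
    · refine ⟨ν.take μ.length, hT.1.2 ν hxL.1 _ (List.take_prefix _ _), ?_⟩
      rw [π.apply_take]
      exact (List.prefix_iff_eq_take.mp hμ).symm
    · exact ⟨κ, hκ.1, rfl⟩
  have hAinf : IsInfTree H A := by
    refine ⟨⟨Or.inl (List.nil_prefix), ?_⟩, ?_, ?_⟩
    · rintro η (hη | ⟨κ, hκ, rfl⟩) μ hpre
      · exact Or.inl (hpre.trans hη)
      · rcases le_or_gt μ.length (n + 1) with hμl | hμl
        · refine Or.inl ?_
          show μ <+: π.apply ν
          exact List.prefix_of_prefix_length_le hpre (π.apply_prefix hκ.2)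
            (by rw [π.length_apply, hxL.2]; exact hμl)
        · refine Or.inr ⟨κ.take μ.length, ⟨hT.1.2 κ hκ.1 _ (List.take_prefix _ _), ?_⟩, ?_⟩
          · rw [List.prefix_take_iff]
            exact ⟨hκ.2, by rw [hxL.2]; omega⟩
          · rw [π.apply_take]
            exact (List.prefix_iff_eq_take.mp hpre).symm
    · rintro η (hη | ⟨κ, hκ, rfl⟩)
      · exact (π.apply_hnode (hT.2.1 ν hxL.1)).of_prefix hη
      · exact π.apply_hnode (hT.2.1 κ hκ.1)
    · rintro η (hη | ⟨κ, hκ, rfl⟩)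
      · rcases eq_or_ne η (π.apply ν) with rfl | hne
        · obtain ⟨ν', hν', h1, h2⟩ := hT.2.2 ν hxL.1
          refine ⟨π.apply ν', Or.inr ⟨ν', ⟨hν', h1⟩, rfl⟩, π.apply_prefix h1, ?_⟩
          intro hc
          have := congrArg List.length hc
          rw [π.length_apply, π.length_apply] at this
          exact h2 (h1.eq_of_length this)
        · have hlt : η.length < (π.apply ν).length := prefix_length_lt hη hne
          refine ⟨(π.apply ν).take (η.length + 1),
            Or.inl (List.take_prefix _ _), ?_, ?_⟩
          · rw [List.prefix_take_iff]
            exact ⟨hη, by omega⟩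
          · intro hc
            have := congrArg List.length hc
            rw [List.length_take] at this
            omega
      · obtain ⟨κ', hκ', h1, h2⟩ := hT.2.2 κ hκ.1
        refine ⟨π.apply κ', Or.inr ⟨κ', ⟨hκ', hκ.2.trans h1⟩, rfl⟩, π.apply_prefix h1, ?_⟩
        intro hc
        have := congrArg List.length hc
        rw [π.length_apply, π.length_apply] at this
        exact h2 (h1.eq_of_length this)
  have hAnarrow : IsNarrowG p.G A :=
    narrow_subtree p (hT.image π) hAinf hAsub
      (narrow_image p hreg hTn π (StdPerm.toCW_isRat s))
  exact ⟨hT.union hAinf, narrow_union_two p hT hAinf hTn hAnarrow⟩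

instance : Nonempty (CWPerm H) := ⟨idCW H⟩

/-- The relation between successive stages of the construction in Lemma 3.14. -/
def StepRel (H : ℕ → ℕ) (p : UnivParam H) (x y : Set Node × ℕ) : Prop :=
  IsInfTree H y.1 ∧ IsNarrowG p.G y.1 ∧ x.1 ⊆ y.1 ∧ x.2 < y.2 ∧
    below y.1 (x.2 + 1) = below x.1 (x.2 + 1) ∧
    HomAt H y.1 x.2 ∧
    (∀ m ≤ x.2, HomAt H x.1 m → HomAt H y.1 m) ∧
    (∃ a, x.2 + 1 ≤ a ∧ a < y.2 ∧ (below y.1 (y.2 + 1), a, y.2) ∈ p.G) ∧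
    ∀ T'' : Set Node, y.1 ⊆ T'' → below T'' (y.2 + 1) = below y.1 (y.2 + 1) →
      ∀ S : Set Node, IsFinTree H S (y.2 + 1) →
        (∀ ν₀ ∈ S, ∀ ν₁ ∈ T'', ν₀.length = x.2 + 1 → ν₁.length = x.2 + 1 →
          ∀ π : CWPerm H, π.IsRat x.2 → π.apply ν₀ = ν₁ →
            π.apply '' aboveNode S ν₀ ⊆ aboveNode T'' ν₁) →
        (S, x.2 + 1, y.2) ∈ p.G

lemma step_exists (hH : ∀ n, 2 ≤ H n) (p : UnivParam H) (hreg : RegularParam p)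
    (x : Set Node × ℕ) (hx : IsInfTree H x.1 ∧ IsNarrowG p.G x.1) :
    ∃ y, StepRel H p x y := by
  classical
  obtain ⟨T₀, n₀⟩ := x
  obtain ⟨hT₀, hT₀n⟩ := hx
  set Tc := clTree H T₀ n₀ with hTcdef
  have hTc : IsInfTree H Tc := clTree_isInfTree hT₀ n₀
  have hTcn : IsNarrowG p.G Tc := clTree_narrow p hreg hT₀ hT₀n n₀
  obtain ⟨νb, hνb⟩ := hTc.levelSet_nonempty (n₀ + 1)
  -- choose swap permutations to `νb` for every `H`-node of length `n₀+1`
  have hswap : ∀ ν₀ ∈ {η : Node | IsHNode H η ∧ η.length = n₀ + 1},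
      ∃ π : CWPerm H, π.IsRat n₀ ∧ π.apply ν₀ = νb ∧
        ∀ μ : Node, π.apply (π.apply μ) = μ := by
    rintro ν₀ ⟨h1, h2⟩
    exact exists_swap_perm hH h1 (hTc.2.1 νb hνb.1) (by rw [h2, hνb.2]) (by omega)
  choose! πf hπ1 hπ2 hπ3 using hswap
  set Ffin : Finset Node := (hnode_level_finite H (n₀ + 1)).toFinset with hFfin
  set V : Set Node := Tc ∪ ⋃ ν₀ ∈ Ffin, (πf ν₀).apply '' Tc with hV
  have hmemF : ∀ ν₀ ∈ Ffin, IsHNode H ν₀ ∧ ν₀.length = n₀ + 1 := by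
    intro ν₀ h
    rwa [hFfin, Set.Finite.mem_toFinset] at h
  have hVprop : IsInfTree H V ∧ IsNarrowG p.G V := by
    refine narrow_finset_union p Ffin _ Tc hTc hTcn ?_
    intro ν₀ hν₀
    have h := hmemF ν₀ hν₀
    exact ⟨hTc.image _, narrow_image p hreg hTcn _ (hπ1 ν₀ ⟨h.1, h.2⟩)⟩
  obtain ⟨a, ham, b, hab, hGV⟩ := hVprop.2 (n₀ + 1)
  have hTcV : Tc ⊆ V := fun η h => Or.inl h
  refine ⟨(Tc, b), hTc, hTcn, subset_clTree T₀ n₀, by omega, below_clTree n₀,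
    clTree_homAt hT₀ n₀, fun m hm hHom => clTree_homAt_preserve hT₀ hm hHom, ?_, ?_⟩
  · -- narrowness witness at level b
    refine ⟨a, ham, hab, ?_⟩
    exact p.G_mono _ a b (b + 1) _ (b + 1) hGV (hVprop.1.finTree_below _)
      (hTc.finTree_below _) le_rfl (fun η h => ⟨hTcV h.1.1, le_of_eq h.2⟩)
      a b le_rfl le_rfl (by omega)
  · -- the capturing property
    intro T'' hsub hbel S hSfin hyp
    have hlevS : levelSet S (b + 1) ⊆ below V (b + 1) := by
      rintro η ⟨hηS, hηlen⟩
      set ν₀ := η.take (n₀ + 1) with hν₀def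
      have hν₀S : ν₀ ∈ S := hSfin.1.2 η hηS ν₀ (List.take_prefix _ _)
      have hν₀len : ν₀.length = n₀ + 1 := by
        rw [hν₀def, List.length_take, hηlen]
        omega
      have hν₀h : IsHNode H ν₀ := (hSfin.2.1 ν₀ hν₀S).1
      have hνbT'' : νb ∈ T'' := hsub hνb.1
      have happ := hyp ν₀ hν₀S νb hνbT'' hν₀len hνb.2 (πf ν₀) (hπ1 ν₀ ⟨hν₀h, hν₀len⟩)
        (hπ2 ν₀ ⟨hν₀h, hν₀len⟩)
      have hπηT'' : (πf ν₀).apply η ∈ T'' :=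
        (happ ⟨η, ⟨hηS, List.take_prefix _ _⟩, rfl⟩).1
      have hπηTc : (πf ν₀).apply η ∈ Tc := by
        have : (πf ν₀).apply η ∈ below T'' (b + 1) :=
          ⟨hπηT'', by rw [(πf ν₀).length_apply, hηlen]⟩
        rw [hbel] at this
        exact this.1
      have hηV : η ∈ V := by
        have hmem : ν₀ ∈ Ffin := by
          rw [hFfin, Set.Finite.mem_toFinset]
          exact ⟨hν₀h, hν₀len⟩
        exact Or.inr (Set.mem_biUnion hmem
          ⟨(πf ν₀).apply η, hπηTc, hπ3 ν₀ ⟨hν₀h, hν₀len⟩ η⟩)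
      exact ⟨hηV, le_of_eq hηlen⟩
    exact p.G_mono _ a b (b + 1) S (b + 1) hGV (hVprop.1.finTree_below _) hSfin le_rfl
      hlevS (n₀ + 1) b ham le_rfl (by omega)

end Aux

/-- Lemma 3.14: every 𝔭-narrow tree extends to a 𝔭-narrow tree `T*` with the
homogeneity properties (b)_k and the capturing properties (c)_k along a strictly
increasing sequence `⟨n_k⟩`. -/
theorem narrow_tree_homogenization (H : ℕ → ℕ) (hH : ∀ n, 2 ≤ H n) (p : UnivParam H)
    (hp : RegularParam p) (T : Set Node) (hT : IsInfTree H T) (hTn : IsNarrow p T) :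
    ∃ (T' : Set Node) (nseq : ℕ → ℕ), IsInfTree H T' ∧ IsNarrow p T' ∧ T ⊆ T' ∧
      StrictMono nseq ∧
      ∀ k,
        (∀ ν₀ ∈ T', ∀ ν₁ ∈ T', ν₀.length = nseq k + 1 → ν₁.length = nseq k + 1 →
          ∀ π : CWPerm H, CWPerm.IsRat π (nseq k) → CWPerm.apply π ν₀ = ν₁ →
            CWPerm.apply π '' aboveNode T' ν₀ = aboveNode T' ν₁) ∧
        (∀ S : Set Node, IsFinTree H S (nseq (k + 1) + 1) →
          (∀ ν₀ ∈ S, ∀ ν₁ ∈ T', ν₀.length = nseq k + 1 → ν₁.length = nseq k + 1 →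
            ∀ π : CWPerm H, CWPerm.IsRat π (nseq k) → CWPerm.apply π ν₀ = ν₁ →
              CWPerm.apply π '' aboveNode S ν₀ ⊆ aboveNode T' ν₁) →
          (S, nseq k + 1, nseq (k + 1)) ∈ p.G) := by
  classical
  have hstep : ∀ x : Set Node × ℕ, IsInfTree H x.1 ∧ IsNarrowG p.G x.1 →
      ∃ y, StepRel H p x y := fun x hx => step_exists hH p hp x hx
  set next : Set Node × ℕ → Set Node × ℕ := fun x =>
    if h : IsInfTree H x.1 ∧ IsNarrowG p.G x.1 then Classical.choose (hstep x h) else x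
    with hnext
  set chain : ℕ → Set Node × ℕ :=
    fun k => Nat.rec (motive := fun _ => Set Node × ℕ) (T, 0) (fun _ ih => next ih) k
    with hchain
  have hchainS : ∀ k, chain (k + 1) = next (chain k) := fun k => rfl
  have hrel : ∀ k, (IsInfTree H (chain k).1 ∧ IsNarrowG p.G (chain k).1) ∧
      StepRel H p (chain k) (chain (k + 1)) := by
    intro k
    induction k with
    | zero =>
      have hgood : IsInfTree H (chain 0).1 ∧ IsNarrowG p.G (chain 0).1 := ⟨hT, hTn⟩
      refine ⟨hgood, ?_⟩
      have h1 : chain (0 + 1) = Classical.choose (hstep (chain 0) hgood) := by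
        rw [hchainS 0, hnext]
        exact dif_pos hgood
      rw [h1]
      exact Classical.choose_spec (hstep (chain 0) hgood)
    | succ k ih =>
      have hgood : IsInfTree H (chain (k + 1)).1 ∧ IsNarrowG p.G (chain (k + 1)).1 :=
        ⟨ih.2.1, ih.2.2.1⟩
      refine ⟨hgood, ?_⟩
      have h1 : chain (k + 1 + 1) = Classical.choose (hstep (chain (k + 1)) hgood) := by
        rw [hchainS (k + 1), hnext]
        exact dif_pos hgood
      rw [h1]
      exact Classical.choose_spec (hstep (chain (k + 1)) hgood)
  set Tk : ℕ → Set Node := fun k => (chain k).1 with hTk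
  set nk : ℕ → ℕ := fun k => (chain k).2 with hnk
  have hinf : ∀ k, IsInfTree H (Tk k) := fun k => (hrel k).1.1
  have hsubstep : ∀ k, Tk k ⊆ Tk (k + 1) := fun k => (hrel k).2.2.2.1
  have hnlt : ∀ k, nk k < nk (k + 1) := fun k => (hrel k).2.2.2.2.1
  have hbelstep : ∀ k, below (Tk (k + 1)) (nk k + 1) = below (Tk k) (nk k + 1) :=
    fun k => (hrel k).2.2.2.2.2.1
  have hhom : ∀ k, HomAt H (Tk (k + 1)) (nk k) := fun k => (hrel k).2.2.2.2.2.2.1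
  have hpres : ∀ k, ∀ m ≤ nk k, HomAt H (Tk k) m → HomAt H (Tk (k + 1)) m :=
    fun k => (hrel k).2.2.2.2.2.2.2.1
  have hwit : ∀ k, ∃ a, nk k + 1 ≤ a ∧ a < nk (k + 1) ∧
      (below (Tk (k + 1)) (nk (k + 1) + 1), a, nk (k + 1)) ∈ p.G :=
    fun k => (hrel k).2.2.2.2.2.2.2.2.1
  have hcap := fun k => (hrel k).2.2.2.2.2.2.2.2.2
  have hnmono : StrictMono nk := strictMono_nat_of_lt_succ hnlt
  have hmono : ∀ k j, k ≤ j → Tk k ⊆ Tk j := by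
    intro k j hkj
    induction j, hkj using Nat.le_induction with
    | base => exact fun _ h => h
    | succ j hkj ih => exact fun η h => hsubstep j (ih h)
  have hstab : ∀ k j, k ≤ j → below (Tk j) (nk k + 1) = below (Tk k) (nk k + 1) := by
    intro k j hkj
    induction j, hkj using Nat.le_induction with
    | base => rfl
    | succ j hkj ih =>
      have h1 : below (Tk (j + 1)) (nk k + 1) = below (Tk j) (nk k + 1) :=
        below_of_below (by have := hnmono.le_iff_le.mpr hkj; omega) (hbelstep j)
      rw [h1, ih]
  set T' : Set Node := ⋃ k, Tk k with hT'
  have hmemT' : ∀ k, Tk k ⊆ T' := fun k η h => Set.mem_iUnion.mpr ⟨k, h⟩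
  have hbelT' : ∀ k, below T' (nk k + 1) = below (Tk k) (nk k + 1) := by
    intro k
    ext η
    constructor
    · rintro ⟨hη, hlen⟩
      obtain ⟨j, hj⟩ := Set.mem_iUnion.mp hη
      rcases le_or_gt k j with h | h
      · exact (hstab k j h) ▸ (⟨hj, hlen⟩ : η ∈ below (Tk j) (nk k + 1))
      · exact ⟨hmono j k (le_of_lt h) hj, hlen⟩
    · rintro ⟨hη, hlen⟩
      exact ⟨hmemT' k hη, hlen⟩
  have hmemall : ∀ k, ∀ η ∈ T', η.length ≤ nk k + 1 → ∀ j, k ≤ j → η ∈ Tk j := by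
    intro k η hη hlen j hkj
    have h1 : η ∈ below T' (nk k + 1) := ⟨hη, hlen⟩
    rw [hbelT' k, ← hstab k j hkj] at h1
    exact h1.1
  have hinfT' : IsInfTree H T' := by
    refine ⟨⟨hmemT' 0 (hinf 0).1.1, ?_⟩, ?_, ?_⟩
    · intro η hη ν hpre
      obtain ⟨j, hj⟩ := Set.mem_iUnion.mp hη
      exact hmemT' j ((hinf j).1.2 η hj ν hpre)
    · intro η hη
      obtain ⟨j, hj⟩ := Set.mem_iUnion.mp hη
      exact (hinf j).2.1 η hj
    · intro η hη
      obtain ⟨j, hj⟩ := Set.mem_iUnion.mp hη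
      obtain ⟨ν, hν, h1, h2⟩ := (hinf j).2.2 η hj
      exact ⟨ν, hmemT' j hν, h1, h2⟩
  have hkle : ∀ k, k ≤ nk k := by
    intro k
    induction k with
    | zero => omega
    | succ k ih => have := hnlt k; omega
  have hnarT' : IsNarrowG p.G T' := by
    intro m
    obtain ⟨a, ha1, ha2, hG⟩ := hwit m
    refine ⟨a, by have := hkle m; omega, nk (m + 1), ha2, ?_⟩
    rw [hbelT' (m + 1)]
    exact hG
  have hhomall : ∀ k j, k + 1 ≤ j → HomAt H (Tk j) (nk k) := by
    intro k j hkj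
    induction j, hkj using Nat.le_induction with
    | base => exact hhom k
    | succ j hkj ih =>
      exact hpres j (nk k) (hnmono.le_iff_le.mpr (by omega)) ih
  refine ⟨T', nk, hinfT', hnarT', hmemT' 0, hnmono, ?_⟩
  intro k
  constructor
  · -- property (b)
    intro ν₀ hν₀ ν₁ hν₁ hl₀ hl₁ π hrat hπν
    have hν₀j : ∀ j, k + 1 ≤ j → ν₀ ∈ levelSet (Tk j) (nk k + 1) :=
      fun j hj => ⟨hmemall k ν₀ hν₀ (le_of_eq hl₀) j (by omega), hl₀⟩
    have hν₁j : ∀ j, k + 1 ≤ j → ν₁ ∈ levelSet (Tk j) (nk k + 1) :=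
      fun j hj => ⟨hmemall k ν₁ hν₁ (le_of_eq hl₁) j (by omega), hl₁⟩
    ext x
    constructor
    · rintro ⟨η, ⟨hηT', hηpre⟩, rfl⟩
      obtain ⟨j₀, hj₀⟩ := Set.mem_iUnion.mp hηT'
      set j := max j₀ (k + 1) with hj
      have hηj : η ∈ Tk j := hmono j₀ j (le_max_left _ _) hj₀
      have hx : π.apply η ∈ aboveNode (Tk j) ν₁ := by
        rw [← hhomall k j (le_max_right _ _) ν₀ (hν₀j j (le_max_right _ _))
          ν₁ (hν₁j j (le_max_right _ _)) π hrat hπν]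
        exact ⟨η, ⟨hηj, hηpre⟩, rfl⟩
      exact ⟨hmemT' j hx.1, hx.2⟩
    · rintro ⟨hxT', hxpre⟩
      obtain ⟨j₀, hj₀⟩ := Set.mem_iUnion.mp hxT'
      set j := max j₀ (k + 1) with hj
      have hxj : x ∈ Tk j := hmono j₀ j (le_max_left _ _) hj₀
      have hx : x ∈ π.apply '' aboveNode (Tk j) ν₀ := by
        rw [hhomall k j (le_max_right _ _) ν₀ (hν₀j j (le_max_right _ _))
          ν₁ (hν₁j j (le_max_right _ _)) π hrat hπν]
        exact ⟨hxj, hxpre⟩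
      obtain ⟨η, hη, rfl⟩ := hx
      exact ⟨η, ⟨hmemT' j hη.1, hη.2⟩, rfl⟩
  · -- property (c)
    intro S hSfin hyp
    exact hcap k T' (hmemT' (k + 1)) (hbelT' (k + 1)) S hSfin hyp

end UnivForcing
end

section
/- For every regular universality parameter 𝔭, add(ℐ_𝔭) ≤ 𝔟, the unbounding number. Equivalently: there is a family of fewer than or equal to 𝔟 many sets in ℐ_𝔭 whose union is not in ℐ_𝔭 — more precisely, for every unbounded family ℱ ⊆ ω^ω, the union ⋃{φ(f) : f ∈ ℱ} of the associated closed 𝔭-narrow sets φ(f) is not in ℐ_𝔭. -/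
open Set Filter MeasureTheory NNReal ENNReal

namespace UnivForcing

open List in
lemma isHNode_of_prefix {H : ℕ → ℕ} {η ν : Node} (hpre : ν <+: η) (hη : IsHNode H η) :
    IsHNode H ν := by
  intro i hi
  have h2 : i < η.length := lt_of_lt_of_le hi hpre.length_le
  have : ν.getD i 0 = η.getD i 0 := by
    rw [List.getD_eq_getElem _ _ hi, List.getD_eq_getElem _ _ h2]
    exact hpre.getElem hi
  rw [this]; exact hη i h2

lemma isHNode_nil {H : ℕ → ℕ} : IsHNode H ([] : Node) := by
  intro i hi; simp at hi

/-- extension by zeros -/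
def extZ (η : Node) (L : ℕ) : Node := η ++ List.replicate (L - η.length) 0

lemma extZ_prefix (η : Node) (L : ℕ) : η <+: extZ η L := ⟨_, rfl⟩

lemma extZ_length {η : Node} {L : ℕ} (h : η.length ≤ L) : (extZ η L).length = L := by
  simp [extZ]; omega

lemma isHNode_extZ {H : ℕ → ℕ} (hH : ∀ n, 0 < H n) {η : Node} (hη : IsHNode H η) (L : ℕ) :
    IsHNode H (extZ η L) := by
  intro i hi
  rcases lt_or_ge i η.length with h | h
  · have : (extZ η L).getD i 0 = η.getD i 0 := by
      rw [List.getD_eq_getElem _ _ hi, List.getD_eq_getElem _ _ h]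
      exact ((extZ_prefix η L).getElem h).symm
    rw [this]; exact hη i h
  · have hlt : i - η.length < (List.replicate (L - η.length) (0:ℕ)).length := by
      simp [extZ] at hi ⊢; omega
    have : (extZ η L).getD i 0 = 0 := by
      rw [List.getD_eq_getElem?_getD]
      simp [extZ, List.getElem?_append_right h]
    rw [this]; exact hH i

lemma branchNode_length (H : ℕ → ℕ) (x : XSp H) (n : ℕ) :
    (branchNode H x n).length = n := by simp [branchNode]

lemma branchNode_getElem (H : ℕ → ℕ) (x : XSp H) (n i : ℕ) (hi : i < n)
    (h : i < (branchNode H x n).length) : (branchNode H x n)[i] = x i := by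
  simp [branchNode]

lemma isHNode_branchNode (H : ℕ → ℕ) (x : XSp H) (n : ℕ) : IsHNode H (branchNode H x n) := by
  intro i hi
  rw [branchNode_length] at hi
  rw [List.getD_eq_getElem _ _ (by rw [branchNode_length]; exact hi),
    branchNode_getElem H x n i hi]
  exact (x i).isLt

lemma branchNode_take (H : ℕ → ℕ) (x : XSp H) {m n : ℕ} (h : m ≤ n) :
    (branchNode H x n).take m = branchNode H x m := by
  apply List.ext_getElem
  · simp [branchNode]; omega
  · intro i h1 h2
    rw [List.getElem_take]
    rw [branchNode_getElem H x n i (by simp [branchNode] at h2; omega),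
      branchNode_getElem H x m i (by simp [branchNode] at h2; omega)]

lemma branchNode_prefix (H : ℕ → ℕ) (x : XSp H) {m n : ℕ} (h : m ≤ n) :
    branchNode H x m <+: branchNode H x n := by
  rw [← branchNode_take H x h]; exact List.take_prefix _ _

/-- full tree of H-nodes of length at most k -/
lemma fullTree_isFinTree {H : ℕ → ℕ} (hH : ∀ n, 0 < H n) (k : ℕ) :
    IsFinTree H {η : Node | IsHNode H η ∧ η.length ≤ k} k := by
  refine ⟨⟨⟨isHNode_nil, by simp⟩, ?_⟩, fun η hη => ⟨hη.1, hη.2⟩, ?_⟩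
  · rintro η ⟨h1, h2⟩ ν hpre
    exact ⟨isHNode_of_prefix hpre h1, le_trans hpre.length_le h2⟩
  · rintro η ⟨h1, h2⟩
    exact ⟨extZ η k, ⟨isHNode_extZ hH h1 k, le_of_eq (extZ_length h2)⟩,
      extZ_prefix η k, extZ_length h2⟩

lemma infTree_extend {H : ℕ → ℕ} {T : Set Node} (hT : IsInfTree H T) {η : Node}
    (hη : η ∈ T) (L : ℕ) (hL : η.length ≤ L) : ∃ ν ∈ T, η <+: ν ∧ ν.length = L := by
  have key : ∀ n : ℕ, ∃ ν ∈ T, η <+: ν ∧ η.length + n ≤ ν.length := by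
    intro n
    induction n with
    | zero => exact ⟨η, hη, List.prefix_refl _, by omega⟩
    | succ n ih =>
      obtain ⟨ν, hν, hpre, hlen⟩ := ih
      obtain ⟨ν', hν', hpre', hne⟩ := hT.2.2 ν hν
      have : ν.length < ν'.length := by
        rcases lt_or_eq_of_le hpre'.length_le with h | h
        · exact h
        · exact absurd (hpre'.eq_of_length h) hne
      exact ⟨ν', hν', hpre.trans hpre', by omega⟩
  obtain ⟨ν, hν, hpre, hlen⟩ := key (L - η.length)
  refine ⟨ν.take L, hT.1.2 ν hν _ (List.take_prefix _ _), ?_, ?_⟩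
  · rw [List.prefix_take_iff]; exact ⟨hpre, hL⟩
  · rw [List.length_take]; omega

lemma below_isFinTree {H : ℕ → ℕ} {T : Set Node} (hT : IsInfTree H T) (n : ℕ) :
    IsFinTree H (below T n) n := by
  refine ⟨⟨⟨hT.1.1, by simp⟩, ?_⟩, fun η hη => ⟨hT.2.1 η hη.1, hη.2⟩, ?_⟩
  · rintro η ⟨h1, h2⟩ ν hpre
    exact ⟨hT.1.2 η h1 ν hpre, le_trans hpre.length_le h2⟩
  · rintro η ⟨h1, h2⟩
    obtain ⟨ν, hν, hpre, hlen⟩ := infTree_extend hT h1 n h2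
    exact ⟨ν, ⟨hν, le_of_eq hlen⟩, hpre, hlen⟩

/-- dependent chain construction -/
lemma dependentChain (Inv : ℕ → Node → Prop) (η₀ : Node) (h₀ : Inv 0 η₀)
    (hstep : ∀ i η, Inv i η → ∃ η', η <+: η' ∧ Inv (i+1) η') :
    ∃ η : ℕ → Node, (∀ i, Inv i (η i)) ∧ ∀ i, η i <+: η (i+1) := by
  classical
  let C : ∀ i : ℕ, {η : Node // Inv i η} := fun i =>
    Nat.rec ⟨η₀, h₀⟩ (fun i ih =>
      ⟨Classical.choose (hstep i ih.1 ih.2), (Classical.choose_spec (hstep i ih.1 ih.2)).2⟩) i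
  refine ⟨fun i => (C i).1, fun i => (C i).2, fun i => ?_⟩
  exact (Classical.choose_spec (hstep i (C i).1 (C i).2)).1

lemma chain_prefix_trans {η : ℕ → Node} (h : ∀ i, η i <+: η (i+1)) :
    ∀ i j, i ≤ j → η i <+: η j := by
  intro i j hij
  induction j with
  | zero => rw [Nat.le_zero.mp hij]
  | succ j ih =>
    rcases Nat.lt_or_ge i (j+1) with hc | hc
    · exact (ih (by omega)).trans (h j)
    · rw [Nat.le_antisymm hij hc]

/-- limit of a chain -/
lemma chain_limit {H : ℕ → ℕ} (η : ℕ → Node) (hpre : ∀ i, η i <+: η (i+1))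
    (hlen : ∀ i, i < (η i).length) (hnode : ∀ i, IsHNode H (η i)) :
    ∃ x : XSp H, ∀ i L, L ≤ (η i).length → branchNode H x L = (η i).take L := by
  have hmono := chain_prefix_trans hpre
  have hx : ∀ n : ℕ, (η n).getD n 0 < H n := fun n => hnode n n (hlen n)
  refine ⟨fun n => ⟨(η n).getD n 0, hx n⟩, fun i L hL => ?_⟩
  apply List.ext_getElem
  · rw [branchNode_length, List.length_take]; omega
  · intro t h1 h2
    rw [branchNode_getElem H _ L t (by rwa [branchNode_length] at h1)]
    rw [List.getElem_take]
    have ht1 : t < (η t).length := hlen t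
    have ht2 : t < (η i).length := by rw [List.length_take] at h2; omega
    show ((η t).getD t 0 : ℕ) = _
    rw [List.getD_eq_getElem _ _ ht1]
    rcases le_total t i with hc | hc
    · exact (hmono t i hc).getElem ht1
    · exact ((hmono i t hc).getElem ht2).symm

/-- iterate lemmas -/
lemma iter_le_iter {F G : ℕ → ℕ} (hFG : ∀ z, F z ≤ G z) (hG : Monotone G) :
    ∀ n x y, x ≤ y → F^[n] x ≤ G^[n] y := by
  intro n
  induction n with
  | zero => intro x y h; simpa using h
  | succ n ih =>
    intro x y h
    rw [Function.iterate_succ_apply', Function.iterate_succ_apply']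
    exact le_trans (hFG _) (hG (ih x y h))

lemma le_iter {F : ℕ → ℕ} (hFe : ∀ z, z ≤ F z) : ∀ n x, x ≤ F^[n] x := by
  intro n
  induction n with
  | zero => simp
  | succ n ih =>
    intro x
    rw [Function.iterate_succ_apply']
    exact le_trans (ih x) (hFe _)

lemma iter_mono_count {F : ℕ → ℕ} (hFe : ∀ z, z ≤ F z) {d n : ℕ} (h : d ≤ n) (x : ℕ) :
    F^[d] x ≤ F^[n] x := by
  have : F^[n] x = F^[n-d] (F^[d] x) := by
    rw [← Function.iterate_add_apply]; congr 1; omega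
  rw [this]; exact le_iter hFe _ _

lemma exists_SFamily {H : ℕ → ℕ} {p : UnivParam H} (hH : ∀ n, 0 < H n) (hp : Suitable p)
    (k : ℕ) :
    ∃ (S : Set Node) (a b m : ℕ), (S, a, b) ∈ p.G ∧ IsFinTree H S m ∧
      (∀ η : Node, IsHNode H η → η.length ≤ k → η ∈ S) ∧ k < a ∧ a ≤ b ∧ b < m := by
  obtain ⟨N, hNk, h2⟩ := hp.2 k
  have hfin := fullTree_isFinTree hH k
  set η : Node := extZ [] N with hηdef
  have hηnode : IsHNode H η := isHNode_extZ hH isHNode_nil N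
  have hηlen : η.length = N := extZ_length (by simp)
  have hmem : η.take k ∈ {η : Node | IsHNode H η ∧ η.length ≤ k} := by
    refine ⟨isHNode_of_prefix (List.take_prefix _ _) hηnode, ?_⟩
    rw [List.length_take]; omega
  obtain ⟨S', a, b, hG, hka, hab, hbN, hsub, _, hηS⟩ := h2 _ hfin η hηnode hηlen hmem
  obtain ⟨m, hfinS, _, _⟩ := p.G_tree _ _ _ hG
  have hNm : N ≤ m := by
    have := (hfinS.2.1 η hηS).2; omega
  exact ⟨S', a, b, m, hG, hfinS, fun η' h1 h2 => hsub ⟨h1, h2⟩, hka, hab, by omega⟩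

lemma narrow_exit {H : ℕ → ℕ} {p : UnivParam H} (hp : Suitable p) {T : Set Node}
    (hT : IsInfTree H T) (hNar : IsNarrowG p.G T) (l : ℕ) :
    ∃ L, l < L ∧ ∀ η : Node, IsHNode H η → η.length = l →
      ∃ ν, IsHNode H ν ∧ ν.length = L ∧ η <+: ν ∧ ν ∉ T := by
  obtain ⟨N, hlN, h1⟩ := hp.1 l
  obtain ⟨a, hNa, b, hab, hG⟩ := hNar N
  refine ⟨b + 1, by omega, fun η hηn hηl => ?_⟩
  obtain ⟨ν, hνn, hνl, hpre, hout⟩ :=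
    h1 _ a b (b+1) hG (below_isFinTree hT (b+1)) hNa η hηn hηl
  exact ⟨ν, hνn, hνl, hpre, fun hc => hout ⟨hc, by omega⟩⟩

/-- the closed set determined by constraints along `c` -/
def phiSet (H : ℕ → ℕ) (Sf : ℕ → Set Node) (mf U : ℕ → ℕ) (c : ℕ → ℕ) : Set (XSp H) :=
  {x | ∀ i, branchNode H x (mf (U (c i))) ∈ Sf (U (c i))}

lemma reach {H : ℕ → ℕ} {Sf : ℕ → Set Node} {mf : ℕ → ℕ} (hH : ∀ n, 0 < H n)
    (hSfin : ∀ k, IsFinTree H (Sf k) (mf k))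
    (hSfull : ∀ k η, IsHNode H η → η.length ≤ k → η ∈ Sf k)
    (k : ℕ) (η : Node) (h1 : IsHNode H η) (h2 : η.length ≤ k) :
    ∃ ν, η <+: ν ∧ IsHNode H ν ∧ ν.length = mf k ∧ ν ∈ Sf k := by
  have hext : extZ η k ∈ Sf k :=
    hSfull k _ (isHNode_extZ hH h1 k) (le_of_eq (extZ_length h2))
  obtain ⟨ν, hν, hpre, hlen⟩ := (hSfin k).2.2 _ hext
  exact ⟨ν, (extZ_prefix η k).trans hpre, ((hSfin k).2.1 ν hν).1, hlen, hν⟩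

lemma U_strictMono {mf U : ℕ → ℕ} (hkm : ∀ k, k < mf k) (hUs : ∀ K, U (K + 1) = mf (U K)) :
    StrictMono U := by
  apply strictMono_nat_of_lt_succ
  intro K; rw [hUs K]; exact hkm _

lemma step_plain {H : ℕ → ℕ} {Sf : ℕ → Set Node} {mf U : ℕ → ℕ} (hH : ∀ n, 0 < H n)
    (hSfin : ∀ k, IsFinTree H (Sf k) (mf k))
    (hSfull : ∀ k η, IsHNode H η → η.length ≤ k → η ∈ Sf k)
    (hkm : ∀ k, k < mf k) (hUs : ∀ K, U (K + 1) = mf (U K))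
    {c : ℕ → ℕ} {i : ℕ} (hc : c i ≤ c (i + 1)) {η : Node}
    (hlen : η.length = mf (U (c i))) (hnode : IsHNode H η) (hmem : η ∈ Sf (U (c i))) :
    ∃ η', η <+: η' ∧ η'.length = mf (U (c (i+1))) ∧ IsHNode H η' ∧ η' ∈ Sf (U (c (i+1))) := by
  rcases eq_or_lt_of_le hc with hceq | hclt
  · exact ⟨η, List.prefix_refl _, by rw [← hceq]; exact hlen, hnode, by rw [← hceq]; exact hmem⟩
  · have hle : η.length ≤ U (c (i+1)) := by
      rw [hlen, ← hUs]
      exact (U_strictMono hkm hUs).monotone (by omega)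
    obtain ⟨ν, hpre, hn, hl, hm⟩ := reach hH hSfin hSfull _ η hnode hle
    exact ⟨ν, hpre, hl, hn, hm⟩

lemma phiSet_nonempty {H : ℕ → ℕ} {Sf : ℕ → Set Node} {mf U : ℕ → ℕ} (hH : ∀ n, 0 < H n)
    (hSfin : ∀ k, IsFinTree H (Sf k) (mf k))
    (hSfull : ∀ k η, IsHNode H η → η.length ≤ k → η ∈ Sf k)
    (hkm : ∀ k, k < mf k) (hUs : ∀ K, U (K + 1) = mf (U K))
    {c : ℕ → ℕ} (hc : Monotone c) (hci : ∀ i, i < c i) :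
    ∃ x : XSp H, x ∈ phiSet H Sf mf U c := by
  obtain ⟨η₀, _, hn0, hl0, hm0⟩ :=
    reach hH hSfin hSfull (U (c 0)) [] isHNode_nil (by simp)
  obtain ⟨η, hInv, hpre⟩ := dependentChain
    (fun i η => η.length = mf (U (c i)) ∧ IsHNode H η ∧ η ∈ Sf (U (c i))) η₀ ⟨hl0, hn0, hm0⟩
    (fun i η hη => by
      obtain ⟨η', h1, h2, h3, h4⟩ :=
        step_plain hH hSfin hSfull hkm hUs (hc (Nat.le_succ i)) hη.1 hη.2.1 hη.2.2
      exact ⟨η', h1, h2, h3, h4⟩)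
  have hlen : ∀ i, i < (η i).length := by
    intro i
    have h1 : U (c i) < mf (U (c i)) := hkm _
    have h2 : c i ≤ U (c i) := (U_strictMono hkm hUs).le_apply
    have h3 := hci i
    have h4 := (hInv i).1
    omega
  obtain ⟨x, hx⟩ := chain_limit η hpre hlen (fun i => (hInv i).2.1)
  refine ⟨x, fun i => ?_⟩
  have hIl := (hInv i).1
  have h := hx i (mf (U (c i))) (le_of_eq hIl.symm)
  rw [← hIl] at h ⊢
  rw [h, List.take_length]
  exact (hInv i).2.2

lemma phiSet_narrowClosed {H : ℕ → ℕ} {p : UnivParam H} {Sf : ℕ → Set Node}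
    {af bf mf U : ℕ → ℕ}
    (hSG : ∀ k, (Sf k, af k, bf k) ∈ p.G)
    (hSfin : ∀ k, IsFinTree H (Sf k) (mf k))
    (hka : ∀ k, k < af k) (hab : ∀ k, af k ≤ bf k) (hbm : ∀ k, bf k < mf k)
    (hkm : ∀ k, k < mf k) (hUs : ∀ K, U (K + 1) = mf (U K))
    {c : ℕ → ℕ} (hci : ∀ i, i < c i)
    {x₀ : XSp H} (hx₀ : x₀ ∈ phiSet H Sf mf U c) :
    NarrowClosedG H p.G (phiSet H Sf mf U c) := by
  set A := phiSet H Sf mf U c with hA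
  set T : Set Node := {η : Node | ∃ x ∈ A, η = branchNode H x η.length} with hT
  have hTmem : ∀ x ∈ A, ∀ L, branchNode H x L ∈ T := by
    intro x hx L
    exact ⟨x, hx, by rw [branchNode_length]⟩
  have hTpre : ∀ η ∈ T, ∀ ν : Node, ν <+: η → ν ∈ T := by
    rintro η ⟨x, hx, hxeq⟩ ν hpre
    have h1 : ν = η.take ν.length := List.prefix_iff_eq_take.mp hpre
    have h2 : ν.length ≤ η.length := hpre.length_le
    rw [h1, hxeq, branchNode_take H x h2]
    exact hTmem x hx _
  have hTinf : IsInfTree H T := by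
    refine ⟨⟨?_, hTpre⟩, ?_, ?_⟩
    · refine ⟨x₀, hx₀, ?_⟩
      simp [branchNode]
    · rintro η ⟨x, hx, hxeq⟩
      rw [hxeq]; exact isHNode_branchNode H x _
    · rintro η ⟨x, hx, hxeq⟩
      refine ⟨branchNode H x (η.length + 1), hTmem x hx _, ?_, ?_⟩
      · have hp := branchNode_prefix H x (Nat.le_succ η.length)
        rw [← hxeq] at hp
        exact hp
      · intro hcon
        have := congrArg List.length hcon
        rw [branchNode_length] at this
        omega
  have hbranches : branches H T = A := by
    ext x
    constructor
    · intro hx i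
      obtain ⟨y, hy, hyeq⟩ := hx (mf (U (c i)))
      rw [branchNode_length] at hyeq
      rw [hyeq]
      exact hy i
    · intro hx L
      exact hTmem x hx L
  refine ⟨T, hTinf, ?_, hbranches.symm⟩
  intro m
  set k := U (c m) with hk
  have hck : c m ≤ k := (U_strictMono hkm hUs).le_apply
  have hma : m ≤ af k := by
    have h1 := hka k
    have h2 := hci m
    omega
  refine ⟨af k, hma, mf k, lt_of_le_of_lt (hab k) (hbm k), ?_⟩
  have hfin1 : IsFinTree H (below T (mf k + 1)) (mf k + 1) := below_isFinTree hTinf _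
  have hlev : levelSet (below T (mf k + 1)) (mf k) ⊆ Sf k := by
    rintro η ⟨⟨⟨x, hx, hxeq⟩, _⟩, hlen⟩
    rw [hxeq, hlen]
    exact hx m
  exact p.G_mono (Sf k) (af k) (bf k) (mf k) (below T (mf k + 1)) (mf k + 1)
    (hSG k) (hSfin k) hfin1 (by omega) hlev (af k) (mf k) le_rfl (le_of_lt (hbm k)) (by omega)
/-- Proposition 4.3 (first part): `add(ℐ_𝔭) ≤ 𝔟`; more precisely there is a map
`φ : ω^ω → ℐ⁰_𝔭` such that for every unbounded family `ℱ ⊆ ω^ω`, the union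
`⋃ {φ(f) : f ∈ ℱ}` is not in `ℐ_𝔭`. -/

theorem add_Ip_le_b (H : ℕ → ℕ) (hH : ∀ n, 2 ≤ H n) (p : UnivParam H)
    (hp : RegularParam p) :
    addIdeal (IpG H p.G) ≤ bNum ∧
    ∃ φ : (ℕ → ℕ) → Set (XSp H), (∀ f, φ f ∈ I0G H p.G) ∧
      ∀ Fam : Set (ℕ → ℕ), (∀ g : ℕ → ℕ, ∃ f ∈ Fam, ¬ evDomLE f g) →
        (⋃ f ∈ Fam, φ f) ∉ IpG H p.G := by
  classical
  have hsuit : Suitable p := hp.1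
  have hH0 : ∀ n, 0 < H n := fun n => lt_of_lt_of_le two_pos (hH n)
  choose Sf af bf mf hSG hSfin hSfull hka hab hbm using
    (fun k => exists_SFamily hH0 hsuit k)
  have hkm : ∀ k, k < mf k := fun k => lt_trans (lt_of_lt_of_le (hka k) (hab k)) (hbm k)
  let U : ℕ → ℕ := fun K => Nat.rec 0 (fun _ ih => mf ih) K
  have hUs : ∀ K, U (K + 1) = mf (U K) := fun K => rfl
  have hUle : ∀ K, K ≤ U K := fun K => (U_strictMono hkm hUs).le_apply
  let Rf : (ℕ → ℕ) → ℕ → ℕ := fun f i => max (i + 1) ((Finset.range (i + 1)).sup f)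
  have hRmono : ∀ f, Monotone (Rf f) := by
    intro f i j hij
    exact max_le_max (Nat.add_le_add_right hij 1)
      (Finset.sup_mono (Finset.range_subset_range.mpr (Nat.add_le_add_right hij 1)))
  have hRg : ∀ f i, i < Rf f i := fun f i =>
    lt_of_lt_of_le (Nat.lt_succ_self i) (le_max_left _ _)
  have hRle : ∀ (f : ℕ → ℕ) n i, n ≤ i → f n ≤ Rf f i := by
    intro f n i hni
    exact le_trans (Finset.le_sup (b := n) (Finset.mem_range.mpr (by omega))) (le_max_right _ _)
  set φ : (ℕ → ℕ) → Set (XSp H) := fun f => phiSet H Sf mf U (Rf f) with hφdef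
  have hne : ∀ f, ∃ x, x ∈ φ f := fun f =>
    phiSet_nonempty hH0 hSfin hSfull hkm hUs (hRmono f) (hRg f)
  have hnc : ∀ f, NarrowClosedG H p.G (φ f) := fun f =>
    phiSet_narrowClosed hSG hSfin hka hab hbm hkm hUs (hRg f) (hne f).choose_spec
  have hI0 : ∀ f, φ f ∈ I0G H p.G := by
    intro f
    exact ⟨1, fun _ => φ f, fun _ => hnc f, by
      intro x hx; exact Set.mem_iUnion.mpr ⟨0, hx⟩⟩
  -- main escape claim
  have main : ∀ Fam : Set (ℕ → ℕ), (∀ g : ℕ → ℕ, ∃ f ∈ Fam, ¬ evDomLE f g) →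
      (⋃ f ∈ Fam, φ f) ∉ IpG H p.G := by
    intro Fam hFam hmem
    obtain ⟨CC, hCC, hcov⟩ := hmem
    choose TT hTinf hTnar hTeq using hCC
    have hexit : ∀ t l, ∃ L, l < L ∧ ∀ η : Node, IsHNode H η → η.length = l →
        ∃ ν, IsHNode H ν ∧ ν.length = L ∧ η <+: ν ∧ ν ∉ TT t := fun t l =>
      narrow_exit hsuit (hTinf t) (hTnar t) l
    choose gE hgE1 hgE2 using hexit
    let W : ℕ → ℕ → ℕ := fun t K =>
      max (K + 1) ((Finset.range (K + 1)).sup fun K' => gE t (mf (U K')))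
    let W' : ℕ → ℕ → ℕ := fun n K =>
      max (K + 1) ((Finset.range (n + 1)).sup fun t => (Finset.range (K + 1)).sup
        fun K' => gE t (mf (U K')))
    let g : ℕ → ℕ := fun n => (W' n)^[n] n
    obtain ⟨f, hfFam, hfg⟩ := hFam g
    have hfreq : ∀ N, ∃ n, N ≤ n ∧ g n < f n := by
      intro N
      by_contra hcon
      push_neg at hcon
      apply hfg
      filter_upwards [eventually_ge_atTop N] with n hn
      have := hcon n hn
      omega
    have hWmono : ∀ t, Monotone (W t) := by
      intro t a b hle
      exact max_le_max (Nat.add_le_add_right hle 1)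
        (Finset.sup_mono (Finset.range_subset_range.mpr (Nat.add_le_add_right hle 1)))
    have hWexp : ∀ t K, K < W t K := fun t K =>
      lt_of_lt_of_le (Nat.lt_succ_self K) (le_max_left _ _)
    have hW'mono : ∀ n, Monotone (W' n) := by
      intro n a b hle
      refine max_le_max (Nat.add_le_add_right hle 1) (Finset.sup_mono_fun ?_)
      intro t _
      exact Finset.sup_mono (Finset.range_subset_range.mpr (Nat.add_le_add_right hle 1))
    have hWW' : ∀ t n, t ≤ n → ∀ K, W t K ≤ W' n K := by
      intro t n htn K
      refine max_le_max le_rfl ?_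
      exact Finset.le_sup (b := t) (f := fun t => (Finset.range (K + 1)).sup
        fun K' => gE t (mf (U K'))) (Finset.mem_range.mpr (by omega))
    have hgw : ∀ t i₀, ∃ i, i₀ ≤ i ∧ gE t (mf (U (Rf f i))) ≤ U (Rf f (i + 1)) := by
      intro t i₀
      refine Classical.byContradiction fun hcon => ?_
      push_neg at hcon
      have hstep : ∀ i, i₀ ≤ i → Rf f (i + 1) ≤ W t (Rf f i) := by
        intro i hi
        have h1 := hcon i hi
        have h2 : Rf f (i + 1) ≤ U (Rf f (i + 1)) := hUle _
        have h3 : gE t (mf (U (Rf f i))) ≤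
            (Finset.range (Rf f i + 1)).sup fun K' => gE t (mf (U K')) :=
          Finset.le_sup (b := Rf f i) (f := fun K' => gE t (mf (U K')))
            (Finset.mem_range.mpr (Nat.lt_succ_self _))
        have h4 : ((Finset.range (Rf f i + 1)).sup fun K' => gE t (mf (U K'))) ≤
            W t (Rf f i) := le_max_right _ _
        omega
      have hiter : ∀ d, Rf f (i₀ + d) ≤ (W t)^[d] (Rf f i₀) := by
        intro d
        induction d with
        | zero => simp
        | succ d ih =>
          rw [Function.iterate_succ_apply']
          calc Rf f (i₀ + d + 1) ≤ W t (Rf f (i₀ + d)) := hstep _ (by omega)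
            _ ≤ W t ((W t)^[d] (Rf f i₀)) := hWmono t ih
      obtain ⟨n, hn1, hn2⟩ := hfreq (max (max i₀ (Rf f i₀)) t)
      have hi0n : i₀ ≤ n := by omega
      have hb1 : Rf f n ≤ (W t)^[n - i₀] (Rf f i₀) := by
        have := hiter (n - i₀)
        rwa [show i₀ + (n - i₀) = n by omega] at this
      have hb2 : (W t)^[n - i₀] (Rf f i₀) ≤ (W t)^[n] (Rf f i₀) :=
        iter_mono_count (fun z => le_of_lt (hWexp t z)) (by omega) _
      have hb3 : (W t)^[n] (Rf f i₀) ≤ (W' n)^[n] n :=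
        iter_le_iter (hWW' t n (by omega)) (hW'mono n) n _ _ (by omega)
      have hfn : f n ≤ Rf f n := hRle f n n le_rfl
      have hgn : g n = (W' n)^[n] n := rfl
      omega
    -- schedule
    let σs : ∀ _ : ℕ, {i : ℕ // gE 0 0 = gE 0 0} := fun t => ⟨t, rfl⟩
    clear σs
    let σsub : (t : ℕ) → {i : ℕ // gE t (mf (U (Rf f i))) ≤ U (Rf f (i + 1))} := fun t =>
      Nat.rec ⟨(hgw 0 0).choose, (hgw 0 0).choose_spec.2⟩
        (fun t ih => ⟨(hgw (t + 1) (ih.1 + 1)).choose,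
          (hgw (t + 1) (ih.1 + 1)).choose_spec.2⟩) t
    let σ : ℕ → ℕ := fun t => (σsub t).1
    have hσsucc : ∀ t, σ t < σ (t + 1) := by
      intro t
      have h := (hgw (t + 1) ((σsub t).1 + 1)).choose_spec.1
      exact lt_of_lt_of_le (Nat.lt_succ_self _) h
    have hσmono : StrictMono σ := strictMono_nat_of_lt_succ hσsucc
    have hσspec : ∀ t, gE t (mf (U (Rf f (σ t)))) ≤ U (Rf f (σ t + 1)) := fun t => (σsub t).2
    -- escape chain
    set Inv : ℕ → Node → Prop := fun i η =>
      η.length = mf (U (Rf f i)) ∧ IsHNode H η ∧ η ∈ Sf (U (Rf f i)) ∧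
        ∀ t, σ t < i → ∃ ν, ν <+: η ∧ ν ∉ TT t with hInvdef
    obtain ⟨η₀, -, hn0, hl0, hm0⟩ :=
      reach hH0 hSfin hSfull (U (Rf f 0)) [] isHNode_nil (by simp)
    have hbase : Inv 0 η₀ := ⟨hl0, hn0, hm0, fun t ht => absurd ht (by omega)⟩
    have hstepInv : ∀ i η, Inv i η → ∃ η', η <+: η' ∧ Inv (i + 1) η' := by
      rintro i η ⟨hl, hn, hm, hex⟩
      by_cases hk : ∃ t, σ t = i
      · obtain ⟨t, ht⟩ := hk
        obtain ⟨ν₀, hν₀n, hν₀l, hν₀pre, hν₀out⟩ := hgE2 t (mf (U (Rf f i))) η hn hl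
        have hν₀le : ν₀.length ≤ U (Rf f (i + 1)) := by
          have hs := hσspec t
          rw [ht] at hs
          rw [hν₀l]
          exact hs
        obtain ⟨η', hpre', hn', hl', hm'⟩ :=
          reach hH0 hSfin hSfull (U (Rf f (i + 1))) ν₀ hν₀n hν₀le
        refine ⟨η', hν₀pre.trans hpre', hl', hn', hm', ?_⟩
        intro t' ht'
        rcases Nat.lt_or_ge (σ t') i with hc | hc
        · obtain ⟨ν, hν1, hν2⟩ := hex t' hc
          exact ⟨ν, hν1.trans (hν₀pre.trans hpre'), hν2⟩
        · have hti : σ t' = i := by omega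
          have htt : t' = t := hσmono.injective (hti.trans ht.symm)
          refine ⟨ν₀, hpre', ?_⟩
          rw [htt]
          exact hν₀out
      · obtain ⟨η', h1, h2, h3, h4⟩ :=
          step_plain hH0 hSfin hSfull hkm hUs (hRmono f (Nat.le_succ i)) hl hn hm
        refine ⟨η', h1, h2, h3, h4, ?_⟩
        intro t' ht'
        have hlt : σ t' < i := by
          rcases Nat.lt_or_ge (σ t') i with hc | hc
          · exact hc
          · exfalso; exact hk ⟨t', by omega⟩
        obtain ⟨ν, hν1, hν2⟩ := hex t' hlt
        exact ⟨ν, hν1.trans h1, hν2⟩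
    obtain ⟨ηc, hInv, hpre⟩ := dependentChain Inv η₀ hbase hstepInv
    have hlen : ∀ i, i < (ηc i).length := by
      intro i
      have h1 : U (Rf f i) < mf (U (Rf f i)) := hkm _
      have h2 : Rf f i ≤ U (Rf f i) := hUle _
      have h3 := hRg f i
      have h4 := (hInv i).1
      omega
    obtain ⟨x, hx⟩ := chain_limit ηc hpre hlen (fun i => (hInv i).2.1)
    have hxφ : x ∈ φ f := by
      intro i
      have hIl := (hInv i).1
      have h := hx i (mf (U (Rf f i))) (le_of_eq hIl.symm)
      rw [← hIl] at h ⊢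
      rw [h, List.take_length]
      exact (hInv i).2.2.1
    have hxU : x ∈ ⋃ f ∈ Fam, φ f := Set.mem_biUnion hfFam hxφ
    have hxC := hcov hxU
    rw [Set.mem_iUnion] at hxC
    obtain ⟨t, hxt⟩ := hxC
    rw [hTeq t] at hxt
    obtain ⟨ν, hνpre, hνout⟩ := (hInv (σ t + 1)).2.2.2 t (Nat.lt_succ_self _)
    have h1 : ν.length ≤ (ηc (σ t + 1)).length := hνpre.length_le
    have h2 := hx (σ t + 1) ν.length h1
    have h3 : (ηc (σ t + 1)).take ν.length = ν := (List.prefix_iff_eq_take.mp hνpre).symm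
    have h4 : branchNode H x ν.length ∈ TT t := hxt ν.length
    rw [h2, h3] at h4
    exact hνout h4
  -- cardinal part
  have hBne : {c : Cardinal | ∃ F : Set (ℕ → ℕ), (∀ g, ∃ f ∈ F, ¬ evDomLE f g) ∧
      Cardinal.mk F = c}.Nonempty := by
    refine ⟨Cardinal.mk (Set.univ : Set (ℕ → ℕ)), Set.univ,
      fun g => ⟨fun n => g n + 1, trivial, ?_⟩, rfl⟩
    intro hc
    obtain ⟨n, hn⟩ := hc.exists
    simp only [] at hn
    omega
  obtain ⟨F₀, hF₀unb, hF₀mk⟩ := csInf_mem hBne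
  have hAsub : (φ '' F₀) ⊆ IpG H p.G := by
    rintro A ⟨f, hf, rfl⟩
    exact ⟨fun _ => φ f, fun _ => hnc f, by
      intro x hx; exact Set.mem_iUnion.mpr ⟨0, hx⟩⟩
  have hnotin : ⋃₀ (φ '' F₀) ∉ IpG H p.G := by
    rw [Set.sUnion_image]
    exact main F₀ hF₀unb
  have h1 : addIdeal (IpG H p.G) ≤ Cardinal.mk (φ '' F₀) :=
    csInf_le ⟨0, fun c _ => zero_le⟩ ⟨φ '' F₀, hAsub, hnotin, rfl⟩
  have h2 : Cardinal.mk (φ '' F₀) ≤ Cardinal.mk F₀ := Cardinal.mk_image_le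
  exact ⟨h1.trans (h2.trans_eq hF₀mk), φ, hI0, main⟩

end UnivForcing
end
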